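/- arXiv:1602.06119 — 6 statements merged into one kernel-verified Lean document; each statement's English description precedes it below -/
import Mathlib

section
/- For every 1 ≤ p < ∞ there is a constant C > 0 (depending only on α and p) such that for all measurable f : ℝ₊ → ℂ, the discrete amalgam norm is dominated by the continuous one: ‖f‖_{p,∞} ≤ C·sup_{y ∈ ℝ₊} (∫_0^∞ |f(x)|^p·(τ_y 1_{[0,1]})(x)·x^{2α+1} dx)^{1/p}. -/
open MeasureTheory Real Set ENNReal ComplexOrder

noncomputable section

/-- The Haar measure `ω_α(dz) = z^(2α+1) dz` of the Bessel–Kingman hypergroup,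
supported on `(0, ∞)`. -/
def omegaM (α : ℝ) : Measure ℝ :=
  (volume.restrict (Set.Ioi (0:ℝ))).withDensity fun z => ENNReal.ofReal (z ^ (2*α+1))

/-- The interval `I_{n+1} = [n, n+1)` (0-based reindexing of the paper's `I_n = [n-1, n)`). -/
def In (n : ℕ) : Set ℝ := Set.Ico (n : ℝ) ((n : ℝ) + 1)

/-- `ω_α`-measure of the `n`-th interval. -/
def wn (α : ℝ) (n : ℕ) : ℝ≥0∞ := omegaM α (In n)

/-- The discrete amalgam norm `‖f‖_{p,q}` (with the conventions of the paper for
`p = ∞` or `q = ∞`, where the corresponding integral/sum becomes a supremum). -/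
def amalgamNorm (α : ℝ) (p q : ℝ≥0∞) {E : Type*} [NormedAddCommGroup E] (f : ℝ → E) : ℝ≥0∞ :=
  let A : ℕ → ℝ≥0∞ := fun n =>
    if p = ∞ then ⨆ x ∈ In n, (‖f x‖₊ : ℝ≥0∞)
    else ((wn α n)⁻¹ * ∫⁻ x in In n, (‖f x‖₊ : ℝ≥0∞) ^ p.toReal ∂(omegaM α)) ^ (1/p.toReal)
  if q = ∞ then ⨆ n, A n
  else (∑' n, wn α n * (A n) ^ q.toReal) ^ (1/q.toReal)

/-- The constant `C_Γ = Γ(α+1)/(Γ(1/2)·Γ(α+1/2)·2^(2α-1))`. -/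
def CGamma (α : ℝ) : ℝ :=
  Real.Gamma (α+1) / (Real.Gamma (1/2) * Real.Gamma (α+1/2) * (2:ℝ) ^ (2*α-1))

/-- The Bessel–Kingman kernel `K_α(x,y,z)`. -/
def Kker (α x y z : ℝ) : ℝ :=
  CGamma α * ((z^2 - (x-y)^2) * ((x+y)^2 - z^2)) ^ (α - 1/2) / (x*y*z) ^ (2*α)

/-- The hypergroup translation `τ_y f(x)`, with the conventions `τ_0 f = f` and
`τ_y f(0) = f(y)`. -/
def tau {E : Type*} [NormedAddCommGroup E] [NormedSpace ℝ E]
    (α y : ℝ) (f : ℝ → E) (x : ℝ) : E :=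
  if y = 0 then f x
  else if x = 0 then f y
  else ∫ z in |x - y|..(x + y), (Kker α x y z * z ^ (2*α+1)) • f z

/-- The hypergroup convolution `(f ⊛ g)(x) = ∫_0^∞ f(y)·τ_y g(x)·y^(2α+1) dy`. -/
def convBK (α : ℝ) (f g : ℝ → ℂ) (x : ℝ) : ℂ :=
  ∫ y in Set.Ioi (0:ℝ), (y ^ (2*α+1)) • (f y * tau α y g x)

/-- The modified Bessel function `j_α`. -/
def jBessel (α x : ℝ) : ℝ :=
  ∑' k : ℕ, (-1)^k * Real.Gamma (α+1) / (2^(2*k) * (k.factorial : ℝ) * Real.Gamma (α + k + 1))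
    * x^(2*k)

/-- The hypergroup Fourier transform `f̂(λ) = ∫_0^∞ f(x)·j_α(λx)·x^(2α+1) dx`. -/
def fourierBK (α : ℝ) (f : ℝ → ℂ) (lam : ℝ) : ℂ :=
  ∫ x in Set.Ioi (0:ℝ), (jBessel α (lam * x) * x ^ (2*α+1)) • f x

/-- The continuous `(p,∞)`-amalgam norm
`sup_{y ≥ 0} (∫_0^∞ |f(x)|^p · τ_y 1_{[0,1]}(x) · x^(2α+1) dx)^(1/p)`. -/
def contNorm (α p : ℝ) {E : Type*} [NormedAddCommGroup E] (f : ℝ → E) : ℝ≥0∞ :=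
  ⨆ y ∈ Set.Ici (0:ℝ),
    (∫⁻ x, (‖f x‖₊ : ℝ≥0∞) ^ p *
        ENNReal.ofReal (tau α y ((Set.Icc (0:ℝ) 1).indicator 1) x) ∂(omegaM α)) ^ (1/p)

/-- The weight `ω_n = ∫_{n-1}^{n} z^(2α+1) dz`, as a real number. -/
def wIn (α : ℝ) (n : ℕ) : ℝ := ∫ z in ((n:ℝ)-1)..(n:ℝ), z ^ (2*α+1)

/-! On `In n = [n, n+1)` with `n ≥ 1`, the translate `τ_{n+1/2} 1_{[0,1]}` is at least a constant
times `n^{-(2α+1)}`: for `z ∈ [3/4, 1]`, in the kernel `K_α(x, n+1/2, z)` the product under the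
power `α - 1/2` is at least `n²` and `xyz ≤ 5n²`. Since `ω_α(In n) ≥ n^{2α+1}`, the
normalised `L^p` mass of `f` on `In n` is bounded by a fixed multiple of the continuous amalgam
integral at `y = n + 1/2`. The interval `In 0` is covered by `y = 0`, where `τ_0` is the identity. -/

lemma CGamma_pos {α : ℝ} (hα : -1/2 < α) : 0 < CGamma α := by
  have := Real.Gamma_pos_of_pos (show 0 < α + 1 by linarith)
  have := Real.Gamma_pos_of_pos (show 0 < α + 1/2 by linarith)
  have := Real.Gamma_pos_of_pos (show (0:ℝ) < 1/2 by norm_num)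
  unfold CGamma
  positivity

lemma Kker_nonneg {α x y z : ℝ} (hα : -1/2 < α) (hx : 0 ≤ x) (hy : 0 ≤ y)
    (hz₁ : |x - y| ≤ z) (hz₂ : z ≤ x + y) : 0 ≤ Kker α x y z := by
  have hz : 0 ≤ z := (abs_nonneg _).trans hz₁
  have h₁ : (x - y)^2 ≤ z^2 := by simpa only [sq_abs] using pow_le_pow_left₀ (abs_nonneg _) hz₁ 2
  have h₂ : z^2 ≤ (x + y)^2 := pow_le_pow_left₀ hz hz₂ 2
  have := CGamma_pos hα
  unfold Kker
  have : 0 ≤ (z^2 - (x-y)^2) * ((x+y)^2 - z^2) := mul_nonneg (by linarith) (by linarith)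
  positivity

lemma continuousOn_Kker_mul_rpow {α x y : ℝ} (hα : 1/2 ≤ α) (hx : 0 < x) (hy : 0 < y) :
    ContinuousOn (fun z => Kker α x y z * z ^ (2*α+1)) (Ioi 0) := by
  unfold Kker
  refine ContinuousOn.mul (ContinuousOn.div ?_ ?_ fun z hz => ?_) ?_
  · exact (continuous_const.mul ((Real.continuous_rpow_const (by linarith)).comp
      (by fun_prop))).continuousOn
  · exact ((Real.continuous_rpow_const (by linarith)).comp (by fun_prop)).continuousOn
  · exact (Real.rpow_pos_of_pos (mul_pos (mul_pos hx hy) hz) _).ne'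
  · exact (Real.continuous_rpow_const (by linarith)).continuousOn

lemma ofReal_rpow_mul_sub_le_omegaM_Ioo {α a b : ℝ} (hα : -1/2 ≤ α) (ha : 0 ≤ a) :
    ENNReal.ofReal (a ^ (2*α+1) * (b - a)) ≤ omegaM α (Ioo a b) := by
  calc ENNReal.ofReal (a ^ (2*α+1) * (b - a))
      = ∫⁻ _ in Ioo a b, ENNReal.ofReal (a ^ (2*α+1)) := by
        rw [setLIntegral_const, Real.volume_Ioo, ENNReal.ofReal_mul (by positivity)]
    _ ≤ ∫⁻ z in Ioo a b, ENNReal.ofReal (z ^ (2*α+1)) :=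
        setLIntegral_mono (by fun_prop) fun z hz =>
          ENNReal.ofReal_le_ofReal (Real.rpow_le_rpow ha hz.1.le (by linarith))
    _ = omegaM α (Ioo a b) := by
        rw [omegaM, withDensity_apply _ measurableSet_Ioo,
          Measure.restrict_restrict measurableSet_Ioo, Ioo_inter_Ioi, max_eq_left ha]

lemma ofReal_rpow_le_wn {α : ℝ} (hα : -1/2 ≤ α) (n : ℕ) :
    ENNReal.ofReal ((n:ℝ) ^ (2*α+1)) ≤ wn α n := by
  have h := ofReal_rpow_mul_sub_le_omegaM_Ioo (b := n + 1) hα n.cast_nonneg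
  rw [add_sub_cancel_left, mul_one] at h
  exact h.trans (measure_mono Ioo_subset_Ico_self)

lemma ofReal_le_wn_zero {α : ℝ} (hα : -1/2 ≤ α) :
    ENNReal.ofReal ((1/2) ^ (2*α+1) * (1/2)) ≤ wn α 0 := by
  have h := ofReal_rpow_mul_sub_le_omegaM_Ioo (a := 1/2) (b := 1) hα (by norm_num)
  rw [show (1:ℝ) - 1/2 = 1/2 by norm_num] at h
  refine h.trans (measure_mono fun z hz => ?_)
  simp only [In, Nat.cast_zero, zero_add, mem_Ico]
  exact ⟨by linarith [hz.1], hz.2⟩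

lemma le_Kker_mul_rpow {α n x z : ℝ} (hα : 1/2 ≤ α) (hn : 1 ≤ n)
    (hx : |x - (n + 1/2)| ≤ 1/2) (hz : z ∈ Icc (3/4) 1) :
    CGamma α * (3/4) ^ (2*α+1) / 5 ^ (2*α) / n ^ (2*α+1)
      ≤ Kker α x (n + 1/2) z * z ^ (2*α+1) := by
  set y := n + 1/2 with hy
  obtain ⟨hx₁, hx₂⟩ := abs_le.mp hx
  obtain ⟨hz₁, hz₂⟩ := hz
  set B := (z^2 - (x-y)^2) * ((x+y)^2 - z^2)
  have hB : n^2 ≤ B := by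
    have : 5/16 ≤ z^2 - (x-y)^2 := by nlinarith
    have : 4 * n^2 ≤ (x+y)^2 - z^2 := by rw [hy]; nlinarith
    nlinarith
  have hxyz : x*y*z ≤ 5 * n^2 := by
    have : x*y ≤ 5 * n^2 := by rw [hy]; nlinarith
    nlinarith [mul_nonneg (by linarith : (0:ℝ) ≤ x) (by linarith : (0:ℝ) ≤ y)]
  have hnum : (n^2) ^ (α-1/2) * (3/4) ^ (2*α+1) ≤ B ^ (α-1/2) * z ^ (2*α+1) := by
    have : 0 ≤ B := (sq_nonneg n).trans hB
    gcongr
  have hxyz₀ : 0 < x*y*z := by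
    have : 0 < x := by linarith
    have : 0 < y := by linarith
    have : 0 < z := by linarith
    positivity
  have hden : (x*y*z) ^ (2*α) ≤ (5 * n^2) ^ (2*α) := by gcongr
  have hconst : CGamma α * (3/4) ^ (2*α+1) / 5 ^ (2*α) / n ^ (2*α+1)
      = CGamma α * ((n^2) ^ (α-1/2) * (3/4) ^ (2*α+1)) / (5 * n^2) ^ (2*α) := by
    have hn0 : 0 ≤ n := by linarith
    rw [Real.mul_rpow (by norm_num) (by positivity), ← Real.rpow_natCast_mul hn0,
      ← Real.rpow_natCast_mul hn0]
    have : n ^ ((2:ℕ) * (2*α)) = n ^ ((2:ℕ) * (α - 1/2)) * n ^ (2*α+1) := by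
      rw [← Real.rpow_add (by linarith)]; push_cast; ring_nf
    rw [this]
    field_simp
  have hC := CGamma_pos (by linarith : -1/2 < α)
  rw [hconst, Kker, div_mul_eq_mul_div, mul_assoc]
  exact div_le_div₀ (mul_nonneg hC.le ((by positivity : (0:ℝ) ≤ _).trans hnum))
    (mul_le_mul_of_nonneg_left hnum hC.le) (by positivity) hden

/- At `x = n + 1/2` the integral defining `τ` starts at `z = 0`, where `Kker` divides by
`(xyz)^{2α} = 0`; that single point is excluded. -/
lemma le_tau_indicator {α n x : ℝ} (hα : 1/2 ≤ α) (hn : 1 ≤ n)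
    (hx : |x - (n + 1/2)| ≤ 1/2) (hxy : x ≠ n + 1/2) :
    CGamma α * (3/4) ^ (2*α+1) / 5 ^ (2*α) / n ^ (2*α+1) / 4
      ≤ tau α (n + 1/2) ((Icc (0:ℝ) 1).indicator 1) x := by
  set y := n + 1/2 with hy
  obtain ⟨hx₁, hx₂⟩ := abs_le.mp hx
  have hy₀ : 0 < y := by linarith
  have hx₀ : 0 < x := by linarith
  set k := fun z => Kker α x y z * z ^ (2*α+1)
  have hk : (fun z => k z • (Icc (0:ℝ) 1).indicator 1 z) = (Icc (0:ℝ) 1).indicator k := by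
    ext z; by_cases hz : z ∈ Icc (0:ℝ) 1 <;> simp [hz]
  rw [tau, if_neg hy₀.ne', if_neg hx₀.ne', hk]
  set d := |x - y|
  have hd₀ : 0 < d := abs_pos.mpr (sub_ne_zero.mpr hxy)
  have hint : IntervalIntegrable ((Icc (0:ℝ) 1).indicator k) volume d (x + y) := by
    have hcont : ContinuousOn k (uIcc d (x + y)) :=
      (continuousOn_Kker_mul_rpow hα hx₀ hy₀).mono fun z hz =>
        hd₀.trans_le (by rw [uIcc_of_le (by linarith)] at hz; exact hz.1)
    exact intervalIntegrable_iff.2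
      ((intervalIntegrable_iff.1 hcont.intervalIntegrable).indicator measurableSet_Icc)
  have hnonneg : 0 ≤ᵐ[volume.restrict (Ioc d (x + y))] (Icc (0:ℝ) 1).indicator k :=
    ae_restrict_of_forall_mem measurableSet_Ioc fun z hz =>
      indicator_nonneg (fun z _ => mul_nonneg
        (Kker_nonneg (by linarith) hx₀.le hy₀.le hz.1.le hz.2)
        (Real.rpow_nonneg (hd₀.trans hz.1).le _)) z
  calc CGamma α * (3/4) ^ (2*α+1) / 5 ^ (2*α) / n ^ (2*α+1) / 4
      = ∫ _ in (3/4:ℝ)..1, CGamma α * (3/4) ^ (2*α+1) / 5 ^ (2*α) / n ^ (2*α+1) := by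
        rw [intervalIntegral.integral_const, smul_eq_mul]; ring
    _ ≤ ∫ z in (3/4:ℝ)..1, (Icc (0:ℝ) 1).indicator k z := by
        refine intervalIntegral.integral_mono_on (by norm_num) intervalIntegrable_const
          (hint.mono_set ?_) fun z hz => ?_
        · rw [uIcc_of_le (by norm_num), uIcc_of_le (by linarith)]
          exact Icc_subset_Icc (by linarith) (by linarith)
        · rw [indicator_of_mem (Icc_subset_Icc (by norm_num) le_rfl hz)]
          exact le_Kker_mul_rpow hα hn hx hz
    _ ≤ ∫ z in d..(x + y), (Icc (0:ℝ) 1).indicator k z :=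
        intervalIntegral.integral_mono_interval (by linarith) (by norm_num) (by linarith)
          hnonneg hint

lemma inv_wn_le_tau_indicator {α : ℝ} (hα : 1/2 ≤ α) {n : ℕ} (hn : 1 ≤ n) {x : ℝ}
    (hx : x ∈ In n) (hxy : x ≠ n + 1/2) :
    (wn α n)⁻¹ ≤ ENNReal.ofReal (4 * 5 ^ (2*α) / (CGamma α * (3/4) ^ (2*α+1)))
      * ENNReal.ofReal (tau α (n + 1/2) ((Icc (0:ℝ) 1).indicator 1) x) := by
  have hn' : (1:ℝ) ≤ n := by exact_mod_cast hn
  have hnα : 0 < (n:ℝ) ^ (2*α+1) := Real.rpow_pos_of_pos (by linarith) _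
  have hC := CGamma_pos (by linarith : -1/2 < α)
  have hτ := le_tau_indicator hα hn' (abs_le.2 ⟨by linarith [hx.1], by linarith [hx.2]⟩) hxy
  calc (wn α n)⁻¹ ≤ (ENNReal.ofReal ((n:ℝ) ^ (2*α+1)))⁻¹ :=
        ENNReal.inv_le_inv.2 (ofReal_rpow_le_wn (by linarith) n)
    _ = ENNReal.ofReal (4 * 5 ^ (2*α) / (CGamma α * (3/4) ^ (2*α+1))
          * (CGamma α * (3/4) ^ (2*α+1) / 5 ^ (2*α) / n ^ (2*α+1) / 4)) := by
        rw [← ENNReal.ofReal_inv_of_pos hnα]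
        congr 1
        field_simp
    _ ≤ _ := by
        rw [ENNReal.ofReal_mul (by positivity)]
        exact mul_le_mul' le_rfl (ENNReal.ofReal_le_ofReal hτ)

lemma inv_wn_zero_le_tau_zero_indicator {α : ℝ} (hα : -1/2 ≤ α) {x : ℝ} (hx : x ∈ In 0) :
    (wn α 0)⁻¹ ≤ ENNReal.ofReal (((1/2) ^ (2*α+1) * (1/2))⁻¹)
      * ENNReal.ofReal (tau α 0 ((Icc (0:ℝ) 1).indicator 1) x) := by
  have hx' : x ∈ Icc (0:ℝ) 1 := by
    simp only [In, Nat.cast_zero, zero_add, mem_Ico] at hx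
    exact ⟨hx.1, hx.2.le⟩
  rw [tau, if_pos rfl, indicator_of_mem hx', Pi.one_apply, ENNReal.ofReal_one, mul_one,
    ENNReal.ofReal_inv_of_pos (by positivity)]
  exact ENNReal.inv_le_inv.2 (ofReal_le_wn_zero hα)

lemma exists_inv_wn_le_tau_indicator {α : ℝ} (hα : 1/2 ≤ α) :
    ∃ K : ℝ, 0 < K ∧ ∀ n : ℕ, ∃ y : ℝ, 0 ≤ y ∧ ∀ᵐ x ∂(omegaM α).restrict (In n),
      (wn α n)⁻¹ ≤ ENNReal.ofReal K * ENNReal.ofReal (tau α y ((Icc (0:ℝ) 1).indicator 1) x) := by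
  have hC := CGamma_pos (by linarith : -1/2 < α)
  set K₀ : ℝ := ((1/2) ^ (2*α+1) * (1/2))⁻¹
  set K₁ : ℝ := 4 * 5 ^ (2*α) / (CGamma α * (3/4) ^ (2*α+1))
  refine ⟨max K₀ K₁, lt_max_of_lt_left (by positivity), fun n => ?_⟩
  rcases Nat.eq_zero_or_pos n with rfl | hn
  · refine ⟨0, le_rfl, ae_restrict_of_forall_mem measurableSet_Ico fun x hx => ?_⟩
    refine (inv_wn_zero_le_tau_zero_indicator (by linarith) hx).trans ?_
    gcongr
    exact le_max_left _ _
  · refine ⟨n + 1/2, by positivity, ?_⟩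
    have hne : ∀ᵐ x ∂(omegaM α).restrict (In n), x ≠ (n:ℝ) + 1/2 := by
      unfold omegaM; exact Measure.ae_ne _ _
    filter_upwards [ae_restrict_mem measurableSet_Ico, hne] with x hx hxy
    refine (inv_wn_le_tau_indicator hα hn hx hxy).trans ?_
    gcongr
    exact le_max_right _ _

lemma amalgam_term_le_contNorm {α p K y : ℝ} {E : Type*} [NormedAddCommGroup E]
    (hp : 0 < p) (hK : 0 ≤ K) (hy : 0 ≤ y) {n : ℕ} (f : ℝ → E)
    (h : ∀ᵐ x ∂(omegaM α).restrict (In n),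
      (wn α n)⁻¹ ≤ ENNReal.ofReal K * ENNReal.ofReal (tau α y ((Icc (0:ℝ) 1).indicator 1) x)) :
    ((wn α n)⁻¹ * ∫⁻ x in In n, (‖f x‖₊ : ℝ≥0∞) ^ p ∂(omegaM α)) ^ (1/p)
      ≤ ENNReal.ofReal (K ^ (1/p)) * contNorm α p f := by
  set T : ℝ≥0∞ := ∫⁻ x, (‖f x‖₊ : ℝ≥0∞) ^ p *
    ENNReal.ofReal (tau α y ((Icc (0:ℝ) 1).indicator 1) x) ∂(omegaM α)
  have hT : (wn α n)⁻¹ * ∫⁻ x in In n, (‖f x‖₊ : ℝ≥0∞) ^ p ∂(omegaM α) ≤ ENNReal.ofReal K * T :=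
    calc _ ≤ ∫⁻ x in In n, (wn α n)⁻¹ * (‖f x‖₊ : ℝ≥0∞) ^ p ∂(omegaM α) :=
          lintegral_const_mul_le _ _
      _ ≤ ∫⁻ x in In n, ENNReal.ofReal K * ((‖f x‖₊ : ℝ≥0∞) ^ p *
            ENNReal.ofReal (tau α y ((Icc (0:ℝ) 1).indicator 1) x)) ∂(omegaM α) :=
          lintegral_mono_ae <| h.mono fun x hx => by
            rw [mul_left_comm, mul_comm]; gcongr
      _ = ENNReal.ofReal K * ∫⁻ x in In n, (‖f x‖₊ : ℝ≥0∞) ^ p *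
            ENNReal.ofReal (tau α y ((Icc (0:ℝ) 1).indicator 1) x) ∂(omegaM α) :=
          lintegral_const_mul' _ _ ENNReal.ofReal_ne_top
      _ ≤ ENNReal.ofReal K * T := by gcongr; exact setLIntegral_le_lintegral _ _
  calc _ ≤ (ENNReal.ofReal K * T) ^ (1/p) := by gcongr
    _ = ENNReal.ofReal (K ^ (1/p)) * T ^ (1/p) := by
        rw [ENNReal.mul_rpow_of_nonneg _ _ (by positivity),
          ENNReal.ofReal_rpow_of_nonneg hK (by positivity)]
    _ ≤ ENNReal.ofReal (K ^ (1/p)) * contNorm α p f := by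
        gcongr
        exact le_biSup (fun y => (∫⁻ x, (‖f x‖₊ : ℝ≥0∞) ^ p *
          ENNReal.ofReal (tau α y ((Icc (0:ℝ) 1).indicator 1) x) ∂(omegaM α)) ^ (1/p))
          (mem_Ici.2 hy)

/-- The discrete `(p,∞)`-amalgam norm is dominated by the continuous one. -/
theorem discrete_le_continuous_amalgam (α : ℝ) (hα : 1/2 ≤ α) (p : ℝ) (hp : 1 ≤ p) :
    ∃ C : ℝ, 0 < C ∧ ∀ f : ℝ → ℂ, Measurable f →
      amalgamNorm α (ENNReal.ofReal p) ⊤ f ≤ ENNReal.ofReal C * contNorm α p f := by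
  have hp₀ : 0 < p := by linarith
  obtain ⟨K, hK, hcover⟩ := exists_inv_wn_le_tau_indicator hα
  refine ⟨K ^ (1/p), Real.rpow_pos_of_pos hK _, fun f _ => ?_⟩
  simp only [amalgamNorm, ENNReal.ofReal_ne_top, ENNReal.toReal_ofReal hp₀.le, reduceIte]
  refine iSup_le fun n => ?_
  obtain ⟨y, hy, hn⟩ := hcover n
  exact amalgam_term_le_contNorm hp₀ hK.le hy f hn
end
end

section
/- For every 1 ≤ p < ∞ there is a constant C > 0 (depending only on α and p) such that for all measurable f : ℝ₊ → ℂ, the continuous amalgam norm is dominated by the discrete one: sup_{y ∈ ℝ₊} (∫_0^∞ |f(x)|^p·(τ_y 1_{[0,1]})(x)·x^{2α+1} dx)^{1/p} ≤ C·‖f‖_{p,∞}. -/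
/-!
The translate `τ_y 1_{[0,1]}` vanishes at `x` unless `|x - y| ≤ 1`, and it satisfies
`τ_y 1_{[0,1]}(x) ≤ D (1 + x)^{-(2α+1)}`: bounding the kernel density `K_α(x,y,z) z^{2α+1}`
pointwise on the range of integration gives `O(1/min(x,y))` on an interval of length `2 min(x,y)`
in general, and `O(x^{-(2α+1)})` on an interval of length `≤ 1` when `x ≥ 2`. Hence the integral
of `|f|^p` against `τ_y 1_{[0,1]} dω_α` only sees the at most three intervals `I_n` meeting
`[y - 1, y + 1]`, and on `I_n` the weight is at most `D / (n+1)^{2α+1} ≤ D / ω_n`, which is exactly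
the normalisation of the discrete amalgam norm.
-/

open MeasureTheory Real Set ENNReal ComplexOrder

noncomputable section

lemma add_sub_abs_sub_eq_two_mul_min (x y : ℝ) : x + y - |x - y| = 2 * min x y := by
  rcases le_total x y with h | h
  · rw [abs_of_nonpos (by linarith), min_eq_left h]; ring
  · rw [abs_of_nonneg (by linarith), min_eq_right h]; ring

lemma min_mul_add_le_two_mul {x y : ℝ} (hx : 0 ≤ x) (hy : 0 ≤ y) :
    min x y * (x + y) ≤ 2 * (x * y) := by
  rcases le_total x y with h | h
  · rw [min_eq_left h]; nlinarith
  · rw [min_eq_right h]; nlinarith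

section Translation

local notation "χ" => Set.indicator (Set.Icc (0:ℝ) 1) (1 : ℝ → ℝ)

variable {α x y : ℝ}

lemma tau_indicator_eq_setIntegral (hx : 0 < x) (hy : 0 < y) :
    tau α y χ x = ∫ z in Ioc |x - y| (x + y) ∩ Icc 0 1, Kker α x y z * z ^ (2*α+1) := by
  have hab : |x - y| ≤ x + y := abs_le.mpr ⟨by linarith, by linarith⟩
  simp only [tau, if_neg hy.ne', if_neg hx.ne', intervalIntegral.integral_of_le hab, smul_eq_mul]
  rw [← setIntegral_indicator measurableSet_Icc]
  congr 1 with z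
  by_cases hz : z ∈ Icc (0:ℝ) 1 <;> simp [hz]

lemma tau_indicator_eq_zero (hx : 0 < x) (hy : 0 ≤ y) (h : 1 < |x - y|) : tau α y χ x = 0 := by
  rcases hy.eq_or_lt with rfl | hy
  · rw [sub_zero, abs_of_pos hx] at h
    simp [tau, indicator_of_notMem (fun hx' : x ∈ Icc (0:ℝ) 1 => h.not_ge hx'.2)]
  · rw [tau_indicator_eq_setIntegral hx hy]
    convert setIntegral_empty
    ext z
    simp only [mem_inter_iff, mem_Ioc, mem_Icc, mem_empty_iff_false, iff_false]
    intro ⟨⟨h1, _⟩, _, h2⟩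
    linarith

lemma tau_indicator_le_mul_volume (hx : 0 < x) (hy : 0 < y) {B : ℝ}
    (hB : ∀ z ∈ Ioc |x - y| (x + y) ∩ Icc 0 1, |Kker α x y z * z ^ (2*α+1)| ≤ B) :
    tau α y χ x ≤ B * volume.real (Ioc |x - y| (x + y) ∩ Icc 0 1) := by
  rw [tau_indicator_eq_setIntegral hx hy]
  refine (le_abs_self _).trans ?_
  rw [← Real.norm_eq_abs]
  refine norm_setIntegral_le_of_norm_le_const ?_ (by simpa only [Real.norm_eq_abs] using hB)
  exact (measure_mono inter_subset_right).trans_lt (by simp)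

lemma abs_Kker_mul_rpow_le (hα : 1/2 ≤ α) (hx : 0 < x) (hy : 0 < y) {z : ℝ}
    (hz : z ∈ Ioc |x - y| (x + y)) {R Q Z : ℝ} (hR : 0 < R)
    (hΔ : (z^2 - (x-y)^2) * ((x+y)^2 - z^2) ≤ R^2) (hQ : 0 < Q) (hQxy : Q ≤ x * y)
    (hZ : z ≤ Z) :
    |Kker α x y z * z ^ (2*α+1)| ≤ CGamma α * (R / Q) ^ (2*α) * (Z / R) := by
  obtain ⟨hlo, hhi⟩ := hz
  have hz0 : 0 < z := (abs_nonneg _).trans_lt hlo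
  have hΔ0 : 0 ≤ (z^2 - (x-y)^2) * ((x+y)^2 - z^2) := by
    have : (x-y)^2 ≤ z^2 := by rw [← sq_abs]; exact pow_le_pow_left₀ (abs_nonneg _) hlo.le 2
    have : z^2 ≤ (x+y)^2 := pow_le_pow_left₀ hz0.le hhi 2
    apply mul_nonneg <;> linarith
  have hCG := CGamma_pos (show -1/2 < α by linarith)
  have hdensity : Kker α x y z * z ^ (2*α+1)
      = CGamma α * ((z^2 - (x-y)^2) * ((x+y)^2 - z^2)) ^ (α - 1/2) * z / (x*y) ^ (2*α) := by
    rw [Kker, Real.mul_rpow (by positivity) hz0.le, Real.rpow_add_one hz0.ne']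
    field_simp
  rw [hdensity, abs_of_nonneg (by positivity)]
  calc CGamma α * ((z^2 - (x-y)^2) * ((x+y)^2 - z^2)) ^ (α - 1/2) * z / (x*y) ^ (2*α)
      ≤ CGamma α * (R^2) ^ (α - 1/2) * Z / Q ^ (2*α) := by
        gcongr
        exact mul_nonneg (by positivity) (by linarith)
    _ = CGamma α * (R / Q) ^ (2*α) * (Z / R) := by
        rw [← Real.rpow_natCast, ← Real.rpow_mul hR.le, Real.div_rpow hR.le hQ.le,
          show (2:ℕ) * (α - 1/2) = 2*α - 1 by push_cast; ring, Real.rpow_sub_one hR.ne']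
        field_simp

lemma tau_indicator_le_const (hα : 1/2 ≤ α) (hx : 0 < x) (hy : 0 < y) :
    tau α y χ x ≤ CGamma α * 8 ^ (2*α) / 2 := by
  set m := min x y
  have hm : 0 < m := lt_min hx hy
  have hwidth := add_sub_abs_sub_eq_two_mul_min x y
  have hprod := min_mul_add_le_two_mul hx.le hy.le
  have hCG := CGamma_pos (show -1/2 < α by linarith)
  have hB : ∀ z ∈ Ioc |x - y| (x + y) ∩ Icc 0 1,
      |Kker α x y z * z ^ (2*α+1)| ≤ CGamma α * 8 ^ (2*α) / (4*m) := by
    rintro z ⟨hz, -⟩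
    have hz0 : 0 < z := (abs_nonneg _).trans_lt hz.1
    have h1 : z^2 - (x-y)^2 ≤ 4*m*(x+y) := by
      rw [← sq_abs (x-y)]
      nlinarith [hz.1, hz.2, abs_nonneg (x-y)]
    have h2 : (x+y)^2 - z^2 ≤ 4*m*(x+y) := by nlinarith [hz.1, hz.2, abs_nonneg (x-y)]
    have h1' : 0 ≤ z^2 - (x-y)^2 := by
      rw [← sq_abs (x-y)]
      nlinarith [hz.1, abs_nonneg (x-y)]
    have hΔ : (z^2 - (x-y)^2) * ((x+y)^2 - z^2) ≤ (4*m*(x+y))^2 :=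
      (mul_le_mul h1 h2 (by nlinarith [hz.2]) (by positivity)).trans_eq (sq _).symm
    have hratio : 4*m*(x+y) / (m*(x+y)/2) = 8 := by field_simp; ring
    have hZR : (x+y) / (4*m*(x+y)) = 1 / (4*m) := by field_simp
    have := abs_Kker_mul_rpow_le hα hx hy hz (by positivity) hΔ (by positivity)
      (by linarith : m*(x+y)/2 ≤ x*y) hz.2
    rwa [hratio, hZR, mul_one_div] at this
  have hvol : volume.real (Ioc |x - y| (x + y) ∩ Icc 0 1) ≤ 2*m := by
    rw [← hwidth, ← Real.volume_real_Ioc_of_le (abs_sub_lt_iff.mpr ⟨by linarith, by linarith⟩).le]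
    exact measureReal_mono inter_subset_left measure_Ioc_lt_top.ne
  calc tau α y χ x ≤ CGamma α * 8 ^ (2*α) / (4*m) * volume.real (Ioc |x - y| (x + y) ∩ Icc 0 1) :=
        tau_indicator_le_mul_volume hx hy hB
    _ ≤ CGamma α * 8 ^ (2*α) / (4*m) * (2*m) := by gcongr
    _ = CGamma α * 8 ^ (2*α) / 2 := by field_simp; ring

lemma tau_indicator_le_of_two_le (hα : 1/2 ≤ α) (hx : 2 ≤ x) (hy : 0 < y) :
    tau α y χ x ≤ CGamma α * 9 ^ (2*α) / 2 / (1 + x) ^ (2*α+1) := by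
  have hx0 : 0 < x := by linarith
  have hCG := CGamma_pos (show -1/2 < α by linarith)
  by_cases hfar : 1 < |x - y|
  · rw [tau_indicator_eq_zero hx0 hy.le hfar]
    positivity
  obtain ⟨hy_le, hy_ge⟩ := abs_le.mp (not_lt.mp hfar)
  have hB : ∀ z ∈ Ioc |x - y| (x + y) ∩ Icc 0 1,
      |Kker α x y z * z ^ (2*α+1)| ≤ CGamma α * 9 ^ (2*α) / 2 / (1 + x) ^ (2*α+1) := by
    rintro z ⟨hz, -, hz1⟩
    have h1 : z^2 - (x-y)^2 ≤ 1 := by nlinarith [hz.1, abs_nonneg (x-y)]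
    have h2 : (x+y)^2 - z^2 ≤ (2*(1+x))^2 := by nlinarith [hz.1, abs_nonneg (x-y)]
    have hΔ : (z^2 - (x-y)^2) * ((x+y)^2 - z^2) ≤ (2*(1+x))^2 :=
      (mul_le_mul h1 h2 (by nlinarith [hz.2, abs_nonneg (x-y)]) zero_le_one).trans_eq (one_mul _)
    -- `x ≥ 2(1+x)/3` and `y ≥ x - 1 ≥ (1+x)/3`
    have hQ : 2*(1+x)^2/9 ≤ x*y := by nlinarith
    have := abs_Kker_mul_rpow_le hα hx0 hy hz (by positivity) hΔ (by positivity) hQ hz1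
    have hratio : 2*(1+x) / (2*(1+x)^2/9) = 9 / (1+x) := by field_simp
    rw [hratio, Real.div_rpow (by norm_num) (by positivity)] at this
    rw [Real.rpow_add_one (show 1 + x ≠ 0 by positivity)]
    convert this using 1
    field_simp
  calc tau α y χ x
      ≤ CGamma α * 9 ^ (2*α) / 2 / (1 + x) ^ (2*α+1)
        * volume.real (Ioc |x - y| (x + y) ∩ Icc 0 1) := tau_indicator_le_mul_volume hx0 hy hB
    _ ≤ CGamma α * 9 ^ (2*α) / 2 / (1 + x) ^ (2*α+1) * 1 := by
        gcongr
        exact (measureReal_mono inter_subset_right (by simp)).trans_eq (by simp)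
    _ = CGamma α * 9 ^ (2*α) / 2 / (1 + x) ^ (2*α+1) := mul_one _

lemma exists_tau_indicator_le_div (hα : 1/2 ≤ α) :
    ∃ D > 0, ∀ x y : ℝ, 0 < x → 0 ≤ y → tau α y χ x ≤ D / (1 + x) ^ (2*α+1) := by
  have hCG := CGamma_pos (show -1/2 < α by linarith)
  set Dnear := CGamma α * 8 ^ (2*α) / 2 * 3 ^ (2*α+1)
  set Dfar := CGamma α * 9 ^ (2*α) / 2
  set Dzero := (2:ℝ) ^ (2*α+1)
  have hDnear : 0 < Dnear := by positivity
  have hDfar : 0 < Dfar := by positivity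
  have hDzero : 0 < Dzero := by positivity
  refine ⟨Dnear + Dfar + Dzero, by positivity, fun x y hx hy => ?_⟩
  have hu : 0 < (1 + x) ^ (2*α+1) := by positivity
  by_cases hfar : 1 < |x - y|
  · rw [tau_indicator_eq_zero hx hy hfar]
    positivity
  rcases hy.eq_or_lt with rfl | hy
  · have hx1 : x ≤ 1 := by simpa [abs_of_pos hx] using hfar
    have hτ : tau α 0 χ x ≤ 1 := by
      simp only [tau]
      exact indicator_apply_le' (fun _ => le_rfl) (fun _ => zero_le_one)
    rw [le_div_iff₀ hu]
    calc tau α 0 χ x * (1 + x) ^ (2*α+1) ≤ 1 * Dzero :=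
          mul_le_mul hτ (Real.rpow_le_rpow (by positivity) (by linarith) (by linarith)) hu.le
            zero_le_one
      _ ≤ Dnear + Dfar + Dzero := by linarith
  rcases lt_or_ge x 2 with hx2 | hx2
  · rw [le_div_iff₀ hu]
    calc tau α y χ x * (1 + x) ^ (2*α+1) ≤ Dnear :=
          mul_le_mul (tau_indicator_le_const hα hx hy)
            (Real.rpow_le_rpow (by positivity) (by linarith) (by linarith)) hu.le (by positivity)
      _ ≤ Dnear + Dfar + Dzero := by linarith
  · have hτ : tau α y χ x ≤ Dfar / (1 + x) ^ (2*α+1) := tau_indicator_le_of_two_le hα hx2 hy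
    exact hτ.trans (by gcongr; linarith)

end Translation

section Amalgam

variable {α : ℝ}

lemma ae_omegaM_pos (α : ℝ) : ∀ᵐ x ∂omegaM α, 0 < x :=
  (withDensity_absolutelyContinuous _ _).ae_le (ae_restrict_mem measurableSet_Ioi)

lemma measurableSet_In (n : ℕ) : MeasurableSet (In n) := measurableSet_Ico

lemma wn_le (hα : 0 ≤ 2*α+1) (n : ℕ) : wn α n ≤ ENNReal.ofReal (((n:ℝ) + 1) ^ (2*α+1)) := by
  rw [wn, omegaM, withDensity_apply _ (measurableSet_In n)]
  calc ∫⁻ z in In n, ENNReal.ofReal (z ^ (2*α+1)) ∂volume.restrict (Ioi 0)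
      ≤ ∫⁻ _ in In n, ENNReal.ofReal (((n:ℝ) + 1) ^ (2*α+1)) ∂volume.restrict (Ioi 0) := by
        refine setLIntegral_mono' (measurableSet_In n) fun z hz => ?_
        exact ENNReal.ofReal_le_ofReal
          (Real.rpow_le_rpow ((Nat.cast_nonneg n).trans hz.1) hz.2.le hα)
    _ ≤ ENNReal.ofReal (((n:ℝ) + 1) ^ (2*α+1)) * volume (In n) := by
        rw [setLIntegral_const]
        gcongr
        exact Measure.restrict_le_self
    _ = ENNReal.ofReal (((n:ℝ) + 1) ^ (2*α+1)) := by simp [In]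

lemma wn_ne_zero (n : ℕ) : wn α n ≠ 0 := by
  rw [wn, omegaM, Ne, withDensity_apply_eq_zero' (by fun_prop),
    Measure.restrict_apply' measurableSet_Ioi]
  intro h
  have hsub : Ioo (n:ℝ) (n + 1) ⊆ {z | ENNReal.ofReal (z ^ (2*α+1)) ≠ 0} ∩ In n ∩ Ioi 0 := by
    intro z hz
    have hz0 : 0 < z := (Nat.cast_nonneg n).trans_lt hz.1
    exact ⟨⟨by simp [Real.rpow_pos_of_pos hz0], hz.1.le, hz.2⟩, hz0⟩
  simpa using measure_mono_null hsub h

variable {E : Type*} [NormedAddCommGroup E] {p : ℝ}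

lemma amalgamNorm_top_eq (hp : 0 < p) (f : ℝ → E) :
    amalgamNorm α (ENNReal.ofReal p) ⊤ f
      = ⨆ n, ((wn α n)⁻¹ * ∫⁻ x in In n, (‖f x‖₊ : ℝ≥0∞) ^ p ∂omegaM α) ^ (1/p) := by
  simp [amalgamNorm, ENNReal.toReal_ofReal hp.le]

lemma setLIntegral_In_le (hα : 0 ≤ 2*α+1) (hp : 0 < p) (f : ℝ → E) (n : ℕ) :
    ∫⁻ x in In n, (‖f x‖₊ : ℝ≥0∞) ^ p ∂omegaM α
      ≤ wn α n * amalgamNorm α (ENNReal.ofReal p) ⊤ f ^ p := by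
  have hwn : wn α n ≠ ⊤ := ne_top_of_le_ne_top ENNReal.ofReal_ne_top (wn_le hα n)
  have hmean : (wn α n)⁻¹ * ∫⁻ x in In n, (‖f x‖₊ : ℝ≥0∞) ^ p ∂omegaM α
      ≤ amalgamNorm α (ENNReal.ofReal p) ⊤ f ^ p := by
    rw [amalgamNorm_top_eq hp, ← ENNReal.rpow_le_rpow_iff (one_div_pos.mpr hp),
      ← ENNReal.rpow_mul, mul_one_div_cancel hp.ne', ENNReal.rpow_one]
    exact le_iSup (fun k => ((wn α k)⁻¹ * ∫⁻ x in In k, (‖f x‖₊ : ℝ≥0∞) ^ p ∂omegaM α) ^ (1/p)) n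
  rwa [← ENNReal.inv_mul_le_iff (wn_ne_zero n) hwn]

lemma setLIntegral_In_mul_le (hα : 0 ≤ 2*α+1) (hp : 0 < p) (f : ℝ → E) (n : ℕ) {w : ℝ → ℝ}
    {D : ℝ} (hD : 0 ≤ D) (hw : ∀ x ∈ In n, 0 < x → w x ≤ D / (1 + x) ^ (2*α+1)) :
    ∫⁻ x in In n, (‖f x‖₊ : ℝ≥0∞) ^ p * ENNReal.ofReal (w x) ∂omegaM α
      ≤ ENNReal.ofReal D * amalgamNorm α (ENNReal.ofReal p) ⊤ f ^ p := by
  have hn : (0:ℝ) < ((n:ℝ) + 1) ^ (2*α+1) := by positivity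
  set c := D / ((n:ℝ) + 1) ^ (2*α+1)
  calc ∫⁻ x in In n, (‖f x‖₊ : ℝ≥0∞) ^ p * ENNReal.ofReal (w x) ∂omegaM α
      ≤ ∫⁻ x in In n, ENNReal.ofReal c * (‖f x‖₊ : ℝ≥0∞) ^ p ∂omegaM α := by
        refine setLIntegral_mono_ae' (measurableSet_In n) ?_
        filter_upwards [ae_omegaM_pos α] with x hx hxn
        rw [mul_comm]
        gcongr
        exact (hw x hxn hx).trans (div_le_div_of_nonneg_left hD hn
          (Real.rpow_le_rpow (by positivity) (by linarith [hxn.1]) hα))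
    _ = ENNReal.ofReal c * ∫⁻ x in In n, (‖f x‖₊ : ℝ≥0∞) ^ p ∂omegaM α :=
        lintegral_const_mul' _ _ ENNReal.ofReal_ne_top
    _ ≤ ENNReal.ofReal c * (ENNReal.ofReal (((n:ℝ) + 1) ^ (2*α+1))
          * amalgamNorm α (ENNReal.ofReal p) ⊤ f ^ p) := by
        gcongr
        exact (setLIntegral_In_le hα hp f n).trans (by gcongr; exact wn_le hα n)
    _ = ENNReal.ofReal D * amalgamNorm α (ENNReal.ofReal p) ⊤ f ^ p := by
        rw [← mul_assoc, ← ENNReal.ofReal_mul' hn.le, div_mul_cancel₀ _ hn.ne']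

lemma subset_In_of_abs_sub_le {x y : ℝ} (hx : 0 ≤ x) (hy : 0 ≤ y) (hxy : |x - y| ≤ 1) :
    x ∈ In (⌊y⌋₊ - 1) ∪ In ⌊y⌋₊ ∪ In (⌊y⌋₊ + 1) := by
  have hxj : x ∈ In ⌊x⌋₊ := ⟨Nat.floor_le hx, Nat.lt_floor_add_one x⟩
  obtain ⟨h1, h2⟩ := abs_le.mp hxy
  have hjk : ⌊x⌋₊ ≤ ⌊y⌋₊ + 1 := by
    rw [← Nat.floor_add_one hy]; exact Nat.floor_le_floor (by linarith)
  have hkj : ⌊y⌋₊ ≤ ⌊x⌋₊ + 1 := by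
    rw [← Nat.floor_add_one hx]; exact Nat.floor_le_floor (by linarith)
  obtain h | h | h : ⌊x⌋₊ = ⌊y⌋₊ - 1 ∨ ⌊x⌋₊ = ⌊y⌋₊ ∨ ⌊x⌋₊ = ⌊y⌋₊ + 1 := by omega
  all_goals rw [h] at hxj; simp [hxj]

lemma lintegral_mul_le_of_decay (hα : 0 ≤ 2*α+1) (hp : 0 < p) (f : ℝ → E) {w : ℝ → ℝ}
    {y D : ℝ} (hy : 0 ≤ y) (hD : 0 ≤ D) (hsupp : ∀ x, 0 < x → 1 < |x - y| → w x = 0)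
    (hdecay : ∀ x, 0 < x → w x ≤ D / (1 + x) ^ (2*α+1)) :
    ∫⁻ x, (‖f x‖₊ : ℝ≥0∞) ^ p * ENNReal.ofReal (w x) ∂omegaM α
      ≤ 3 * ENNReal.ofReal D * amalgamNorm α (ENNReal.ofReal p) ⊤ f ^ p := by
  set k := ⌊y⌋₊
  set S := In (k - 1) ∪ In k ∪ In (k + 1)
  have hS : MeasurableSet S :=
    ((measurableSet_In _).union (measurableSet_In _)).union (measurableSet_In _)
  have hI : ∀ n, ∫⁻ x in In n, (‖f x‖₊ : ℝ≥0∞) ^ p * ENNReal.ofReal (w x) ∂omegaM α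
      ≤ ENNReal.ofReal D * amalgamNorm α (ENNReal.ofReal p) ⊤ f ^ p :=
    fun n => setLIntegral_In_mul_le hα hp f n hD fun x _ hx => hdecay x hx
  calc ∫⁻ x, (‖f x‖₊ : ℝ≥0∞) ^ p * ENNReal.ofReal (w x) ∂omegaM α
      ≤ ∫⁻ x, S.indicator (fun x => (‖f x‖₊ : ℝ≥0∞) ^ p * ENNReal.ofReal (w x)) x ∂omegaM α := by
        refine lintegral_mono_ae ?_
        filter_upwards [ae_omegaM_pos α] with x hx
        by_cases hxy : 1 < |x - y|
        · simp [hsupp x hx hxy]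
        · rw [indicator_of_mem (subset_In_of_abs_sub_le hx.le hy (not_lt.mp hxy))]
    _ = ∫⁻ x in S, (‖f x‖₊ : ℝ≥0∞) ^ p * ENNReal.ofReal (w x) ∂omegaM α := lintegral_indicator hS _
    _ ≤ ENNReal.ofReal D * amalgamNorm α (ENNReal.ofReal p) ⊤ f ^ p
        + ENNReal.ofReal D * amalgamNorm α (ENNReal.ofReal p) ⊤ f ^ p
        + ENNReal.ofReal D * amalgamNorm α (ENNReal.ofReal p) ⊤ f ^ p :=
        (lintegral_union_le _ _ _).trans
          (add_le_add ((lintegral_union_le _ _ _).trans (add_le_add (hI _) (hI _))) (hI _))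
    _ = 3 * ENNReal.ofReal D * amalgamNorm α (ENNReal.ofReal p) ⊤ f ^ p := by ring

end Amalgam

/-- The continuous `(p,∞)`-amalgam norm is dominated by the discrete one. -/
theorem continuous_le_discrete_amalgam (α : ℝ) (hα : 1/2 ≤ α) (p : ℝ) (hp : 1 ≤ p) :
    ∃ C : ℝ, 0 < C ∧ ∀ f : ℝ → ℂ, Measurable f →
      contNorm α p f ≤ ENNReal.ofReal C * amalgamNorm α (ENNReal.ofReal p) ⊤ f := by
  obtain ⟨D, hD, hτ⟩ := exists_tau_indicator_le_div hα
  have hp0 : 0 < p := by linarith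
  refine ⟨(3 * D) ^ (1/p), by positivity, fun f _ => iSup₂_le fun y hy => ?_⟩
  have hbound := lintegral_mul_le_of_decay (by linarith) hp0 f hy hD.le
    (fun x hx => tau_indicator_eq_zero hx hy) (fun x hx => hτ x y hx hy)
  calc _ ≤ (ENNReal.ofReal (3 * D) * amalgamNorm α (ENNReal.ofReal p) ⊤ f ^ p) ^ (1/p) := by
        rw [ENNReal.ofReal_mul zero_le_three, ENNReal.ofReal_ofNat]
        gcongr
    _ = ENNReal.ofReal ((3 * D) ^ (1/p)) * amalgamNorm α (ENNReal.ofReal p) ⊤ f := by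
        rw [ENNReal.mul_rpow_of_nonneg _ _ (by positivity), ← ENNReal.rpow_mul,
          mul_one_div_cancel hp0.ne', ENNReal.rpow_one,
          ENNReal.ofReal_rpow_of_nonneg (by positivity) (by positivity)]
end
end

section
/- Uniform boundedness of translation on (L^∞, ℓ¹): there is a constant C > 0 (depending only on α) such that for every y ∈ ℝ₊ and every measurable f : ℝ₊ → ℂ with ‖f‖_{∞,1} < ∞ one has ‖τ_y f‖_{∞,1} ≤ C·‖f‖_{∞,1}. -/
open MeasureTheory Real Set ENNReal ComplexOrder

noncomputable section

/-!
For `x ∈ I_n` the translate is bounded by `|τ_y f(x)| ≤ ∑ₘ c_{nm}(y) · sup_{I_m} |f|`, where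
`c_{nm}(y)` is the largest kernel mass carried from a point of `I_n` into `I_m`; the theorem thus
reduces to the column bound `∑ₙ ω_n c_{nm}(y) ≲ ω_m ≍ (m+1)^(2α+1)`, uniformly in `y`.
The kernel density is `C_Γ (4Δ)^(2α-1) z / (xy)^(2α)` with `Δ` the area of the triangle with
sides `x, y, z`. Bounding `2Δ ≤ xy` shows that the total mass is at most `C_Γ 2^(2α)`; bounding
`2Δ ≤ yz` gives `ω_n c_{nm}(y) ≲ (n+1)(m+1)^(2α)/y` for `n ≥ 1`. Only the `O(min(y, m) + 1)`
indices `n` with `|n - m| ≤ ⌊y⌋ + 1 ≤ n + m + 2` contribute: for `y < 1` the first bound suffices,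
for `y ≥ 1` the second one does. The point `x = 0`, where `τ_y f(0) = f(y)`, costs an extra
`ω_0 ≤ 2^(2α+2) ω_⌊y⌋`.
-/

namespace BesselKingman

variable {α : ℝ}

lemma CGamma_pos (hα : -1/2 < α) : 0 < CGamma α := by
  have h1 := Real.Gamma_pos_of_pos (by linarith : 0 < α + 1)
  have h2 := Real.Gamma_pos_of_pos (by linarith : 0 < α + 1/2)
  have h3 := Real.Gamma_pos_of_pos (by norm_num : (0:ℝ) < 1/2)
  unfold CGamma
  positivity

lemma mem_In_floor {x : ℝ} (hx : 0 ≤ x) : x ∈ In ⌊x⌋₊ :=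
  ⟨Nat.floor_le hx, Nat.lt_floor_add_one x⟩

lemma volume_In (n : ℕ) : volume (In n) = 1 := by
  simp [In, Real.volume_Ico]

lemma wn_eq_setLIntegral (n : ℕ) :
    wn α n = ∫⁻ z in In n ∩ Ioi 0, ENNReal.ofReal (z ^ (2*α+1)) := by
  have hIn : MeasurableSet (In n) := measurableSet_Ico
  rw [wn, omegaM, withDensity_apply _ hIn, Measure.restrict_restrict hIn]

lemma wn_le (hα : -1/2 ≤ α) (n : ℕ) : wn α n ≤ ENNReal.ofReal (((n:ℝ)+1) ^ (2*α+1)) := by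
  rw [wn_eq_setLIntegral]
  calc ∫⁻ z in In n ∩ Ioi 0, ENNReal.ofReal (z ^ (2*α+1))
      ≤ ∫⁻ _ in In n, ENNReal.ofReal (((n:ℝ)+1) ^ (2*α+1)) := by
        refine (setLIntegral_mono measurable_const fun z hz => ?_).trans
          (lintegral_mono_set inter_subset_left)
        exact ENNReal.ofReal_le_ofReal (Real.rpow_le_rpow hz.2.le hz.1.2.le (by linarith))
    _ = ENNReal.ofReal (((n:ℝ)+1) ^ (2*α+1)) := by rw [setLIntegral_const, volume_In, mul_one]

lemma le_wn (hα : -1/2 ≤ α) (n : ℕ) :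
    ENNReal.ofReal (((n:ℝ)+1) ^ (2*α+1) / 2 ^ (2*α+2)) ≤ wn α n := by
  rw [wn_eq_setLIntegral]
  have hsub : Ico ((n:ℝ)+1/2) ((n:ℝ)+1) ⊆ In n ∩ Ioi 0 := fun z hz =>
    ⟨⟨by linarith [hz.1], hz.2⟩, show (0:ℝ) < z by linarith [hz.1, (Nat.cast_nonneg n : (0:ℝ) ≤ n)]⟩
  have h2 : (2:ℝ) ^ (2*α+2) = 2 ^ (2*α+1) * 2 := by
    rw [← Real.rpow_add_one (by norm_num)]; ring_nf
  calc ENNReal.ofReal (((n:ℝ)+1) ^ (2*α+1) / 2 ^ (2*α+2))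
      = ∫⁻ _ in Ico ((n:ℝ)+1/2) ((n:ℝ)+1), ENNReal.ofReal ((((n:ℝ)+1)/2) ^ (2*α+1)) := by
        rw [setLIntegral_const, Real.volume_Ico, ← ENNReal.ofReal_mul (by positivity),
          Real.div_rpow (by positivity) (by norm_num), h2]
        congr 1
        field_simp
        ring
    _ ≤ ∫⁻ z in Ico ((n:ℝ)+1/2) ((n:ℝ)+1), ENNReal.ofReal (z ^ (2*α+1)) :=
        setLIntegral_mono (by fun_prop) fun z hz => ENNReal.ofReal_le_ofReal
          (Real.rpow_le_rpow (by positivity) (by linarith [hz.1]) (by linarith))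
    _ ≤ ∫⁻ z in In n ∩ Ioi 0, ENNReal.ofReal (z ^ (2*α+1)) := lintegral_mono_set hsub

section LocalSup

variable {E : Type*} [NormedAddCommGroup E]

def localSup (f : ℝ → E) (n : ℕ) : ℝ≥0∞ := ⨆ x ∈ In n, (‖f x‖₊ : ℝ≥0∞)

lemma amalgamNorm_top_one (f : ℝ → E) :
    amalgamNorm α ⊤ 1 f = ∑' n, wn α n * localSup f n := by
  simp [amalgamNorm, localSup]

lemma enorm_le_localSup (f : ℝ → E) {n : ℕ} {x : ℝ} (hx : x ∈ In n) : ‖f x‖ₑ ≤ localSup f n :=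
  le_iSup₂ (f := fun x (_ : x ∈ In n) => (‖f x‖₊ : ℝ≥0∞)) x hx

lemma setLIntegral_mul_enorm_le_tsum {s : Set ℝ} (hs : s ⊆ Ici 0) {h : ℝ → ℝ≥0∞}
    (hh : Measurable h) (f : ℝ → E) :
    ∫⁻ z in s, h z * ‖f z‖ₑ ≤ ∑' m, (∫⁻ z in In m ∩ s, h z) * localSup f m := by
  have hcover : s = ⋃ m, In m ∩ s := by
    rw [← iUnion_inter, eq_comm, inter_eq_right]
    exact fun z hz => mem_iUnion.2 ⟨_, mem_In_floor (hs hz)⟩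
  calc ∫⁻ z in s, h z * ‖f z‖ₑ ≤ ∑' m, ∫⁻ z in In m ∩ s, h z * ‖f z‖ₑ := by
        conv_lhs => rw [hcover]
        exact lintegral_iUnion_le _ _
    _ ≤ ∑' m, ∫⁻ z in In m ∩ s, h z * localSup f m :=
        ENNReal.tsum_le_tsum fun m => setLIntegral_mono (hh.mul_const _) fun z hz => by
          gcongr; exact enorm_le_localSup f hz.1
    _ = ∑' m, (∫⁻ z in In m ∩ s, h z) * localSup f m := by
        simp_rw [lintegral_mul_const _ hh]

end LocalSup

def kernelDensity (α x y z : ℝ) : ℝ := Kker α x y z * z ^ (2*α+1)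

lemma tau_eq_integral {E : Type*} [NormedAddCommGroup E] [NormedSpace ℝ E] {x y : ℝ}
    (hx : x ≠ 0) (hy : y ≠ 0) (f : ℝ → E) :
    tau α y f x = ∫ z in |x - y|..(x + y), kernelDensity α x y z • f z := by
  rw [tau, if_neg hy, if_neg hx]
  rfl

lemma measurable_kernelDensity (x y : ℝ) : Measurable (kernelDensity α x y) := by
  unfold kernelDensity Kker
  fun_prop

/- `(z² - (x-y)²)((x+y)² - z²)` is sixteen times the squared area of the triangle with sides
`x, y, z` (Heron), hence at most `(2ab)²` for any two sides `a, b`. -/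
lemma heron_le_sq_mul_left (x y z : ℝ) : (z^2 - (x-y)^2) * ((x+y)^2 - z^2) ≤ (2*x*y)^2 := by
  nlinarith [sq_nonneg (x^2 + y^2 - z^2)]

lemma heron_le_sq_mul_right (x y z : ℝ) : (z^2 - (x-y)^2) * ((x+y)^2 - z^2) ≤ (2*y*z)^2 := by
  nlinarith [sq_nonneg (y^2 + z^2 - x^2)]

section Kernel

variable {x y z : ℝ}

lemma heron_nonneg (hz : z ∈ Ioc |x - y| (x + y)) : 0 ≤ (z^2 - (x-y)^2) * ((x+y)^2 - z^2) := by
  have hz0 : 0 ≤ z := (abs_nonneg _).trans hz.1.le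
  have h1 : (x-y)^2 ≤ z^2 := by rw [← sq_abs]; exact pow_le_pow_left₀ (abs_nonneg _) hz.1.le 2
  have h2 : z^2 ≤ (x+y)^2 := pow_le_pow_left₀ hz0 hz.2 2
  exact mul_nonneg (by linarith) (by linarith)

lemma kernelDensity_eq (hx : 0 < x) (hy : 0 < y) (hz : 0 < z) :
    kernelDensity α x y z
      = CGamma α * ((z^2 - (x-y)^2) * ((x+y)^2 - z^2)) ^ (α - 1/2) * z / (x*y) ^ (2*α) := by
  rw [kernelDensity, Kker, Real.mul_rpow (by positivity) hz.le, Real.rpow_add_one hz.ne']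
  have : z ^ (2*α) ≠ 0 := (Real.rpow_pos_of_pos hz _).ne'
  field_simp

lemma kernelDensity_nonneg (hα : -1/2 < α) (hx : 0 < x) (hy : 0 < y)
    (hz : z ∈ Ioc |x - y| (x + y)) : 0 ≤ kernelDensity α x y z := by
  have hz0 : 0 < z := (abs_nonneg _).trans_lt hz.1
  have := CGamma_pos hα
  have := heron_nonneg hz
  rw [kernelDensity_eq hx hy hz0]
  positivity

lemma kernelDensity_le (hα : 1/2 ≤ α) (hx : 0 < x) (hy : 0 < y) (hz : z ∈ Ioc |x - y| (x + y))
    {Q : ℝ} (hQ : 0 ≤ Q) (hPQ : (z^2 - (x-y)^2) * ((x+y)^2 - z^2) ≤ Q^2) :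
    kernelDensity α x y z ≤ CGamma α * Q ^ (2*α - 1) * z / (x*y) ^ (2*α) := by
  have hz0 : 0 < z := (abs_nonneg _).trans_lt hz.1
  have := CGamma_pos (by linarith : -1/2 < α)
  have hQ2 : (Q^2) ^ (α - 1/2) = Q ^ (2*α - 1) := by
    rw [← Real.rpow_natCast, ← Real.rpow_mul hQ]; ring_nf
  rw [kernelDensity_eq hx hy hz0, ← hQ2]
  gcongr
  exact heron_nonneg hz

lemma kernelDensity_le_div_mul (hα : 1/2 ≤ α) (hx : 0 < x) (hy : 0 < y)
    (hz : z ∈ Ioc |x - y| (x + y)) :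
    kernelDensity α x y z ≤ CGamma α * 2 ^ (2*α - 1) * z / (x*y) := by
  refine (kernelDensity_le hα hx hy hz (by positivity) (heron_le_sq_mul_left x y z)).trans_eq ?_
  have hxy : 0 < x*y := by positivity
  rw [mul_assoc 2, Real.mul_rpow (by norm_num) hxy.le, Real.rpow_sub_one hxy.ne']
  have : (x*y) ^ (2*α) ≠ 0 := (Real.rpow_pos_of_pos hxy _).ne'
  field_simp

lemma kernelDensity_le_rpow_div (hα : 1/2 ≤ α) (hx : 0 < x) (hy : 0 < y)
    (hz : z ∈ Ioc |x - y| (x + y)) :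
    kernelDensity α x y z ≤ CGamma α * 2 ^ (2*α - 1) * z ^ (2*α) / (x ^ (2*α) * y) := by
  have hz0 : 0 < z := (abs_nonneg _).trans_lt hz.1
  refine (kernelDensity_le hα hx hy hz (by positivity) (heron_le_sq_mul_right x y z)).trans_eq ?_
  rw [mul_assoc 2, Real.mul_rpow (by norm_num) (by positivity), Real.mul_rpow hy.le hz0.le,
    Real.mul_rpow hx.le hy.le, Real.rpow_sub_one hy.ne', Real.rpow_sub_one hz0.ne']
  have : y ^ (2*α) ≠ 0 := (Real.rpow_pos_of_pos hy _).ne'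
  have : x ^ (2*α) ≠ 0 := (Real.rpow_pos_of_pos hx _).ne'
  field_simp

end Kernel

lemma setLIntegral_Ioc_ofReal_mul_id {a b c : ℝ} (ha : 0 ≤ a) (hab : a ≤ b) (hc : 0 ≤ c) :
    ∫⁻ z in Ioc a b, ENNReal.ofReal (c * z) = ENNReal.ofReal (c * (b^2 - a^2) / 2) := by
  rw [← ofReal_integral_eq_lintegral_ofReal
    (by fun_prop : Continuous fun z => c * z).integrableOn_Ioc
    ((ae_restrict_mem measurableSet_Ioc).mono fun z hz => mul_nonneg hc (ha.trans hz.1.le)),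
    ← intervalIntegral.integral_of_le hab, intervalIntegral.integral_const_mul, integral_id]
  ring_nf

lemma setLIntegral_kernelDensity_le (hα : 1/2 ≤ α) {x y : ℝ} (hx : 0 < x) (hy : 0 < y) :
    ∫⁻ z in Ioc |x - y| (x + y), ENNReal.ofReal (kernelDensity α x y z)
      ≤ ENNReal.ofReal (CGamma α * 2 ^ (2*α)) := by
  have hc : 0 ≤ CGamma α * 2 ^ (2*α - 1) / (x*y) :=
    have := CGamma_pos (by linarith : -1/2 < α); by positivity
  calc ∫⁻ z in Ioc |x - y| (x + y), ENNReal.ofReal (kernelDensity α x y z)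
      ≤ ∫⁻ z in Ioc |x - y| (x + y), ENNReal.ofReal (CGamma α * 2 ^ (2*α - 1) / (x*y) * z) :=
        setLIntegral_mono (by fun_prop) fun z hz => ENNReal.ofReal_le_ofReal <|
          (kernelDensity_le_div_mul hα hx hy hz).trans_eq (by ring)
    _ = ENNReal.ofReal (CGamma α * 2 ^ (2*α)) := by
        rw [setLIntegral_Ioc_ofReal_mul_id (abs_nonneg _)
          (abs_le.2 ⟨by linarith, by linarith⟩) hc, sq_abs, Real.rpow_sub_one two_ne_zero]
        congr 1
        field_simp
        ring

def kernelMass (α y : ℝ) (n m : ℕ) : ℝ≥0∞ :=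
  ⨆ x ∈ In n, ∫⁻ z in In m ∩ Ioc |x - y| (x + y), ENNReal.ofReal (kernelDensity α x y z)

section KernelMass

variable {y : ℝ} {n m : ℕ}

lemma kernelMass_le_of_forall (hy : 0 ≤ y) {B : ℝ≥0∞}
    (h : ∀ x ∈ In n, 0 < x →
      ∫⁻ z in In m ∩ Ioc |x - y| (x + y), ENNReal.ofReal (kernelDensity α x y z) ≤ B) :
    kernelMass α y n m ≤ B := by
  refine iSup₂_le fun x hx => ?_
  rcases ((Nat.cast_nonneg n).trans hx.1).eq_or_lt with rfl | hx0
  · simp [abs_of_nonneg hy]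
  · exact h x hx hx0

lemma kernelMass_le (hα : 1/2 ≤ α) (hy : 0 < y) (n m : ℕ) :
    kernelMass α y n m ≤ ENNReal.ofReal (CGamma α * 2 ^ (2*α)) :=
  kernelMass_le_of_forall hy.le fun _ _ hx =>
    (lintegral_mono_set inter_subset_right).trans (setLIntegral_kernelDensity_le hα hx hy)

lemma kernelMass_le_rpow_div (hα : 1/2 ≤ α) (hy : 0 < y) (hn : n ≠ 0) (m : ℕ) :
    kernelMass α y n m
      ≤ ENNReal.ofReal (CGamma α * 2 ^ (2*α - 1) * ((m:ℝ)+1) ^ (2*α) / ((n:ℝ) ^ (2*α) * y)) := by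
  have := CGamma_pos (by linarith : -1/2 < α)
  have hn0 : (0:ℝ) < n := by positivity
  refine kernelMass_le_of_forall hy.le fun x hx hx0 => ?_
  calc ∫⁻ z in In m ∩ Ioc |x - y| (x + y), ENNReal.ofReal (kernelDensity α x y z)
      ≤ ∫⁻ _ in In m, ENNReal.ofReal
          (CGamma α * 2 ^ (2*α - 1) * ((m:ℝ)+1) ^ (2*α) / ((n:ℝ) ^ (2*α) * y)) := by
        refine (setLIntegral_mono measurable_const fun z hz => ?_).trans
          (lintegral_mono_set inter_subset_left)
        refine ENNReal.ofReal_le_ofReal ((kernelDensity_le_rpow_div hα hx0 hy hz.2).trans ?_)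
        have hz0 : 0 ≤ z := (abs_nonneg _).trans hz.2.1.le
        gcongr
        exacts [hz.1.2.le, hx.1]
    _ = _ := by rw [setLIntegral_const, volume_In, mul_one]

lemma wn_mul_kernelMass_le (hα : 1/2 ≤ α) (hy : 0 < y) (hn : n ≠ 0) (m : ℕ) :
    wn α n * kernelMass α y n m ≤ ENNReal.ofReal
      (CGamma α * 2 ^ (2*α - 1) * 2 ^ (2*α) * ((n:ℝ)+1) * ((m:ℝ)+1) ^ (2*α) / y) := by
  have := CGamma_pos (by linarith : -1/2 < α)
  have hn0 : (0:ℝ) < n := by positivity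
  have hn1 : ((n:ℝ)+1) ^ (2*α) ≤ 2 ^ (2*α) * (n:ℝ) ^ (2*α) := by
    rw [← Real.mul_rpow (by norm_num) hn0.le]
    gcongr
    linarith [(Nat.one_le_cast.2 (Nat.one_le_iff_ne_zero.2 hn) : (1:ℝ) ≤ n)]
  refine (mul_le_mul' (wn_le (by linarith) n) (kernelMass_le_rpow_div hα hy hn m)).trans ?_
  rw [← ENNReal.ofReal_mul (by positivity), Real.rpow_add_one (by positivity)]
  refine ENNReal.ofReal_le_ofReal ?_
  calc ((n:ℝ)+1) ^ (2*α) * ((n:ℝ)+1)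
        * (CGamma α * 2 ^ (2*α - 1) * ((m:ℝ)+1) ^ (2*α) / ((n:ℝ) ^ (2*α) * y))
      ≤ 2 ^ (2*α) * (n:ℝ) ^ (2*α) * ((n:ℝ)+1)
        * (CGamma α * 2 ^ (2*α - 1) * ((m:ℝ)+1) ^ (2*α) / ((n:ℝ) ^ (2*α) * y)) := by gcongr
    _ = _ := by
        have : (n:ℝ) ^ (2*α) ≠ 0 := (Real.rpow_pos_of_pos hn0 _).ne'
        field_simp

lemma le_of_kernelMass_ne_zero (hy : 0 ≤ y) (h : kernelMass α y n m ≠ 0) :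
    m ≤ n + ⌊y⌋₊ + 1 ∧ n ≤ m + ⌊y⌋₊ + 1 ∧ ⌊y⌋₊ ≤ n + m + 1 := by
  obtain ⟨x, hx, hne⟩ : ∃ x ∈ In n,
      ∫⁻ z in In m ∩ Ioc |x - y| (x + y), ENNReal.ofReal (kernelDensity α x y z) ≠ 0 := by
    by_contra! h0
    exact h (by simpa [kernelMass, ENNReal.iSup_eq_zero] using h0)
  obtain ⟨z, hzm, hz⟩ : (In m ∩ Ioc |x - y| (x + y)).Nonempty := by
    by_contra! h0
    exact hne (by simp [h0])
  have hF : (⌊y⌋₊ : ℝ) ≤ y := Nat.floor_le hy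
  have hyF : y < ⌊y⌋₊ + 1 := Nat.lt_floor_add_one y
  have h1 := le_abs_self (x - y)
  have h2 := neg_abs_le (x - y)
  have hx' : (n:ℝ) ≤ x ∧ x < n + 1 := hx
  have hz' : (m:ℝ) ≤ z ∧ z < m + 1 := hzm
  have c1 : m < n + ⌊y⌋₊ + 2 := by exact_mod_cast (by linarith [hz.2] : (m:ℝ) < n + ⌊y⌋₊ + 2)
  have c2 : n < m + ⌊y⌋₊ + 2 := by exact_mod_cast (by linarith [hz.1] : (n:ℝ) < m + ⌊y⌋₊ + 2)
  have c3 : ⌊y⌋₊ < n + m + 2 := by exact_mod_cast (by linarith [hz.1] : (⌊y⌋₊:ℝ) < n + m + 2)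
  omega

end KernelMass

lemma tsum_le_card_mul {β : Type*} {f : β → ℝ≥0∞} (s : Finset β) {B : ℝ≥0∞}
    (hf : ∀ b ∉ s, f b = 0) (hB : ∀ b ∈ s, f b ≤ B) : ∑' b, f b ≤ s.card * B := by
  rw [tsum_eq_sum hf, ← nsmul_eq_mul]
  exact Finset.sum_le_card_nsmul s f B hB

lemma min_mul_le_mul (F m : ℕ) (hF : 1 ≤ F) :
    min (2*F+3) (2*m+4) * (m+F+2) ≤ 15 * F * (m+1) := by
  rcases le_total F (m+1) with h | h
  · nlinarith [min_le_left (2*F+3) (2*m+4)]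
  · nlinarith [min_le_right (2*F+3) (2*m+4)]

section ColumnSums

variable {y : ℝ}

lemma tsum_wn_mul_kernelMass_le_min_mul (hy : 0 ≤ y) (m : ℕ) {B : ℝ≥0∞}
    (hB : ∀ n ≤ m + ⌊y⌋₊ + 1, wn α n * kernelMass α y n m ≤ B) :
    ∑' n, wn α n * kernelMass α y n m ≤ (min (2*⌊y⌋₊+3) (2*m+4) : ℕ) * B := by
  set s := Finset.Icc (max (m - (⌊y⌋₊+1)) (⌊y⌋₊ - (m+1))) (m + ⌊y⌋₊ + 1)
  have hs : s.card ≤ min (2*⌊y⌋₊+3) (2*m+4) := by rw [Nat.card_Icc]; omega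
  refine (tsum_le_card_mul s (fun n hn => ?_) fun n hn => hB n (Finset.mem_Icc.1 hn).2).trans ?_
  · by_contra h
    have := le_of_kernelMass_ne_zero hy (right_ne_zero_of_mul h)
    exact hn (Finset.mem_Icc.2 ⟨by omega, by omega⟩)
  · gcongr

lemma tsum_wn_mul_kernelMass_le_of_lt_one (hα : 1/2 ≤ α) (hy : 0 < y) (hy1 : y < 1) (m : ℕ) :
    ∑' n, wn α n * kernelMass α y n m
      ≤ ENNReal.ofReal (3 * 2 ^ (2*α+1) * (CGamma α * 2 ^ (2*α)) * ((m:ℝ)+1) ^ (2*α+1)) := by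
  have := CGamma_pos (by linarith : -1/2 < α)
  have hF : ⌊y⌋₊ = 0 := Nat.floor_eq_zero.2 hy1
  set B := 2 ^ (2*α+1) * ((m:ℝ)+1) ^ (2*α+1) * (CGamma α * 2 ^ (2*α))
  have hterm : ∀ n ≤ m + ⌊y⌋₊ + 1, wn α n * kernelMass α y n m ≤ ENNReal.ofReal B := by
    intro n hn
    have hnm : (n:ℝ) + 1 ≤ 2 * ((m:ℝ)+1) := by
      have : (n:ℝ) ≤ m + 1 := by exact_mod_cast (by omega : n ≤ m + 1)
      linarith
    refine (mul_le_mul' (wn_le (by linarith) n) (kernelMass_le hα hy n m)).trans ?_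
    rw [← ENNReal.ofReal_mul (by positivity)]
    refine ENNReal.ofReal_le_ofReal ?_
    calc ((n:ℝ)+1) ^ (2*α+1) * (CGamma α * 2 ^ (2*α))
        ≤ (2 * ((m:ℝ)+1)) ^ (2*α+1) * (CGamma α * 2 ^ (2*α)) := by gcongr
      _ = B := by rw [Real.mul_rpow (by norm_num) (by positivity)]
  refine (tsum_wn_mul_kernelMass_le_min_mul hy.le m hterm).trans ?_
  calc ((min (2*⌊y⌋₊+3) (2*m+4) : ℕ) : ℝ≥0∞) * ENNReal.ofReal B ≤ 3 * ENNReal.ofReal B := by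
        gcongr
        exact_mod_cast (by omega : min (2*⌊y⌋₊+3) (2*m+4) ≤ 3)
    _ = _ := by
        rw [← ENNReal.ofReal_ofNat, ← ENNReal.ofReal_mul (by norm_num)]
        congr 1
        simp only [B]
        ring

lemma tsum_wn_mul_kernelMass_le_of_one_le (hα : 1/2 ≤ α) (hy1 : 1 ≤ y) (m : ℕ) :
    ∑' n, wn α n * kernelMass α y n m
      ≤ ENNReal.ofReal ((4 * (CGamma α * 2 ^ (2*α)) + 15 * (CGamma α * 2 ^ (2*α - 1) * 2 ^ (2*α)))
          * ((m:ℝ)+1) ^ (2*α+1)) := by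
  have := CGamma_pos (by linarith : -1/2 < α)
  set F := ⌊y⌋₊
  set C₀ := CGamma α * 2 ^ (2*α)
  set K := CGamma α * 2 ^ (2*α - 1) * 2 ^ (2*α)
  set M := min (2*F+3) (2*m+4)
  have hF1 : 1 ≤ F := Nat.le_floor (by exact_mod_cast hy1)
  have hFy : (F:ℝ) ≤ y := Nat.floor_le (by linarith)
  have hF0 : (0:ℝ) < F := by exact_mod_cast hF1
  set B := C₀ + K * ((m:ℝ)+F+2) * ((m:ℝ)+1) ^ (2*α) / F
  have hterm : ∀ n ≤ m + F + 1, wn α n * kernelMass α y n m ≤ ENNReal.ofReal B := by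
    intro n hn
    rcases eq_or_ne n 0 with rfl | hn0
    · have hw0 : wn α 0 ≤ 1 := by simpa using wn_le (α := α) (by linarith) 0
      calc wn α 0 * kernelMass α y 0 m ≤ 1 * ENNReal.ofReal C₀ :=
            mul_le_mul' hw0 (kernelMass_le hα (by linarith) 0 m)
        _ ≤ ENNReal.ofReal B := by
            rw [one_mul]
            exact ENNReal.ofReal_le_ofReal (le_add_of_nonneg_right (by positivity))
    · refine (wn_mul_kernelMass_le hα (by linarith) hn0 m).trans (ENNReal.ofReal_le_ofReal ?_)
      have : (n:ℝ) + 1 ≤ m + F + 2 := by exact_mod_cast (by omega : n + 1 ≤ m + F + 2)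
      calc K * ((n:ℝ)+1) * ((m:ℝ)+1) ^ (2*α) / y ≤ K * ((m:ℝ)+F+2) * ((m:ℝ)+1) ^ (2*α) / F := by
            gcongr
        _ ≤ B := le_add_of_nonneg_left (by positivity)
  have hcount : (M:ℝ) * ((m:ℝ)+F+2) ≤ 15 * F * ((m:ℝ)+1) := by
    exact_mod_cast min_mul_le_mul F m hF1
  have hM : (M:ℝ) ≤ 4 * ((m:ℝ)+1) ^ (2*α+1) := by
    have : (M:ℝ) ≤ 4 * ((m:ℝ)+1) := by exact_mod_cast (by omega : M ≤ 4 * (m+1))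
    linarith [Real.self_le_rpow_of_one_le (by linarith : (1:ℝ) ≤ (m:ℝ)+1)
      (by linarith : (1:ℝ) ≤ 2*α+1)]
  refine (tsum_wn_mul_kernelMass_le_min_mul (by linarith) m hterm).trans ?_
  rw [← ENNReal.ofReal_natCast, ← ENNReal.ofReal_mul (by positivity)]
  refine ENNReal.ofReal_le_ofReal ?_
  calc (M:ℝ) * B = M * C₀ + K * ((m:ℝ)+1) ^ (2*α) * (M * ((m:ℝ)+F+2)) / F := by ring
    _ ≤ 4 * ((m:ℝ)+1) ^ (2*α+1) * C₀ + K * ((m:ℝ)+1) ^ (2*α) * (15 * F * ((m:ℝ)+1)) / F := by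
        gcongr
    _ = (4 * C₀ + 15 * K) * ((m:ℝ)+1) ^ (2*α+1) := by
        rw [Real.rpow_add_one (by positivity)]
        field_simp

end ColumnSums

lemma exists_tsum_wn_mul_kernelMass_le (hα : 1/2 ≤ α) :
    ∃ C : ℝ, 0 ≤ C ∧ ∀ y : ℝ, 0 < y → ∀ m : ℕ,
      ∑' n, wn α n * kernelMass α y n m ≤ ENNReal.ofReal C * wn α m := by
  have := CGamma_pos (by linarith : -1/2 < α)
  set C₀ := CGamma α * 2 ^ (2*α)
  set K := CGamma α * 2 ^ (2*α - 1) * 2 ^ (2*α)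
  set D := 3 * 2 ^ (2*α+1) * C₀ + (4 * C₀ + 15 * K)
  refine ⟨D * 2 ^ (2*α+2), by positivity, fun y hy m => ?_⟩
  have hD : ∑' n, wn α n * kernelMass α y n m ≤ ENNReal.ofReal (D * ((m:ℝ)+1) ^ (2*α+1)) := by
    rcases lt_or_ge y 1 with hy1 | hy1
    · refine (tsum_wn_mul_kernelMass_le_of_lt_one hα hy hy1 m).trans (ENNReal.ofReal_le_ofReal ?_)
      gcongr
      exact le_add_of_nonneg_right (by positivity)
    · refine (tsum_wn_mul_kernelMass_le_of_one_le hα hy1 m).trans (ENNReal.ofReal_le_ofReal ?_)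
      gcongr
      exact le_add_of_nonneg_left (by positivity)
  refine hD.trans ?_
  calc ENNReal.ofReal (D * ((m:ℝ)+1) ^ (2*α+1))
      = ENNReal.ofReal (D * 2 ^ (2*α+2)) * ENNReal.ofReal (((m:ℝ)+1) ^ (2*α+1) / 2 ^ (2*α+2)) := by
        rw [← ENNReal.ofReal_mul (by positivity)]
        field_simp
    _ ≤ ENNReal.ofReal (D * 2 ^ (2*α+2)) * wn α m := by gcongr; exact le_wn (by linarith) m

lemma wn_zero_le (hα : -1/2 ≤ α) (k : ℕ) : wn α 0 ≤ ENNReal.ofReal (2 ^ (2*α+2)) * wn α k := by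
  have hk : (1:ℝ) ≤ ((k:ℝ)+1) ^ (2*α+1) :=
    Real.one_le_rpow (by linarith [(Nat.cast_nonneg k : (0:ℝ) ≤ k)]) (by linarith)
  calc wn α 0 ≤ ENNReal.ofReal (2 ^ (2*α+2) * (((k:ℝ)+1) ^ (2*α+1) / 2 ^ (2*α+2))) := by
        refine (wn_le hα 0).trans (ENNReal.ofReal_le_ofReal ?_)
        rw [mul_div_cancel₀ _ (by positivity)]
        simpa using hk
    _ ≤ ENNReal.ofReal (2 ^ (2*α+2)) * wn α k := by
        rw [ENNReal.ofReal_mul (by positivity)]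
        gcongr
        exact le_wn hα k

lemma tsum_mul_tsum_mul_le {ι κ : Type*} {w : ι → ℝ≥0∞} {v : κ → ℝ≥0∞} {c : ι → κ → ℝ≥0∞}
    {C : ℝ≥0∞} (hc : ∀ j, ∑' i, w i * c i j ≤ C * v j) (b : κ → ℝ≥0∞) :
    ∑' i, w i * ∑' j, c i j * b j ≤ C * ∑' j, v j * b j := by
  calc ∑' i, w i * ∑' j, c i j * b j = ∑' j, (∑' i, w i * c i j) * b j := by
        simp_rw [← ENNReal.tsum_mul_left, ← ENNReal.tsum_mul_right, mul_assoc]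
        exact ENNReal.tsum_comm
    _ ≤ ∑' j, C * v j * b j := by gcongr with j; exact hc j
    _ = C * ∑' j, v j * b j := by simp_rw [mul_assoc, ENNReal.tsum_mul_left]

section Translation

variable {E : Type*} [NormedAddCommGroup E] [NormedSpace ℝ E] {y : ℝ}

lemma tau_zero (f : ℝ → E) : tau α 0 f = f := by
  funext x
  simp [tau]

lemma enorm_tau_le (hα : -1/2 < α) {x : ℝ} (hx : 0 < x) (hy : 0 < y) (f : ℝ → E) :
    ‖tau α y f x‖ₑ
      ≤ ∫⁻ z in Ioc |x - y| (x + y), ENNReal.ofReal (kernelDensity α x y z) * ‖f z‖ₑ := by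
  rw [tau_eq_integral hx.ne' hy.ne',
    intervalIntegral.integral_of_le (abs_le.2 ⟨by linarith, by linarith⟩)]
  refine (enorm_integral_le_lintegral_enorm _).trans_eq (setLIntegral_congr_fun measurableSet_Ioc
    fun z hz => ?_)
  rw [enorm_smul, Real.enorm_eq_ofReal (kernelDensity_nonneg hα hx hy hz)]

lemma localSup_tau_le (hα : -1/2 < α) (hy : 0 < y) (f : ℝ → E) (n : ℕ) :
    localSup (tau α y f) n
      ≤ (if n = 0 then localSup f ⌊y⌋₊ else 0) + ∑' m, kernelMass α y n m * localSup f m := by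
  refine iSup₂_le fun x hx => ?_
  rcases ((Nat.cast_nonneg n).trans hx.1).eq_or_lt with rfl | hx0
  · have hn : n = 0 := Nat.cast_eq_zero.1 (hx.1.antisymm (Nat.cast_nonneg n))
    rw [tau, if_neg hy.ne', if_pos rfl, if_pos hn]
    exact le_add_right (enorm_le_localSup f (mem_In_floor hy.le))
  · refine le_add_left ((enorm_tau_le hα hx0 hy f).trans ?_)
    refine (setLIntegral_mul_enorm_le_tsum (fun z hz => (abs_nonneg _).trans hz.1.le)
      (measurable_kernelDensity x y).ennreal_ofReal f).trans (ENNReal.tsum_le_tsum fun m => ?_)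
    gcongr
    exact le_iSup₂ (f := fun x (_ : x ∈ In n) =>
      ∫⁻ z in In m ∩ Ioc |x - y| (x + y), ENNReal.ofReal (kernelDensity α x y z)) x hx

lemma amalgamNorm_tau_le (hα : -1/2 < α) (hy : 0 < y) (f : ℝ → E) {C : ℝ≥0∞}
    (hC : ∀ m, ∑' n, wn α n * kernelMass α y n m ≤ C * wn α m) :
    amalgamNorm α ⊤ 1 (tau α y f) ≤ (ENNReal.ofReal (2 ^ (2*α+2)) + C) * amalgamNorm α ⊤ 1 f := by
  rw [amalgamNorm_top_one, amalgamNorm_top_one, add_mul]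
  calc ∑' n, wn α n * localSup (tau α y f) n
      ≤ ∑' n, wn α n * ((if n = 0 then localSup f ⌊y⌋₊ else 0)
          + ∑' m, kernelMass α y n m * localSup f m) := by
        gcongr with n; exact localSup_tau_le hα hy f n
    _ = wn α 0 * localSup f ⌊y⌋₊ + ∑' n, wn α n * ∑' m, kernelMass α y n m * localSup f m := by
        simp [mul_add, ENNReal.tsum_add]
    _ ≤ ENNReal.ofReal (2 ^ (2*α+2)) * ∑' m, wn α m * localSup f m
          + C * ∑' m, wn α m * localSup f m := by
        refine add_le_add ?_ (tsum_mul_tsum_mul_le hC _)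
        calc wn α 0 * localSup f ⌊y⌋₊
            ≤ ENNReal.ofReal (2 ^ (2*α+2)) * (wn α ⌊y⌋₊ * localSup f ⌊y⌋₊) := by
              rw [← mul_assoc]; gcongr; exact wn_zero_le hα.le _
          _ ≤ _ := by gcongr; exact ENNReal.le_tsum _

end Translation

end BesselKingman

open BesselKingman in
/-- Uniform boundedness of the hypergroup translation on `(L^∞, ℓ¹)`. -/
theorem translation_bounded_infty_one (α : ℝ) (hα : 1/2 ≤ α) :
    ∃ C : ℝ, 0 < C ∧ ∀ y : ℝ, 0 ≤ y → ∀ f : ℝ → ℂ, Measurable f →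
      amalgamNorm α ⊤ 1 f < ⊤ →
      amalgamNorm α ⊤ 1 (tau α y f) ≤ ENNReal.ofReal C * amalgamNorm α ⊤ 1 f := by
  obtain ⟨D, hD, hcol⟩ := exists_tsum_wn_mul_kernelMass_le hα
  have h2 : (1:ℝ) ≤ 2 ^ (2*α+2) := Real.one_le_rpow (by norm_num) (by linarith)
  refine ⟨2 ^ (2*α+2) + D, by linarith, fun y hy f _ _ => ?_⟩
  rcases hy.eq_or_lt with rfl | hy
  · rw [tau_zero]
    exact le_mul_of_one_le_left' (ENNReal.one_le_ofReal.2 (by linarith))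
  · rw [ENNReal.ofReal_add (by positivity) hD]
    exact amalgamNorm_tau_le (by linarith) hy f (hcol y hy)
end
end

section
/- For every integer n ≥ 1 and every x ∈ [n, n+1), the translated indicator is bounded below by its value at the right endpoint: τ_{n+1/2} 1_{[0,1]}(x) ≥ τ_{n+1/2} 1_{[0,1]}(n+1). -/
open MeasureTheory Real Set ENNReal ComplexOrder

noncomputable section

/-! The substitution `u = (z² - (x-y)²)/(4xy)` maps `[|x-y|, x+y]` onto `[0, 1]` and turns the
kernel measure `K_α(x,y,z) z^(2α+1) dz` into `C_Γ 2^(4α-1) (u(1-u))^(α-1/2) du`. Hence, when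
`|x - y| ≤ 1 ≤ x + y`, `τ_y 1_{[0,1]}(x)` is `C_Γ 2^(4α-1)` times the integral of the nonnegative
weight `(u(1-u))^(α-1/2)` over `[0, (1 - (x-y)²)/(4xy)]`, and the theorem reduces to comparing
these upper limits for `y = n + 1/2`. -/

def kingmanSubst (x y z : ℝ) : ℝ := (z ^ 2 - (x - y) ^ 2) / (4 * x * y)

def betaWeight (α u : ℝ) : ℝ := (u * (1 - u)) ^ (α - 1/2)

lemma continuous_betaWeight {α : ℝ} (hα : 1/2 ≤ α) : Continuous (betaWeight α) :=
  (continuous_rpow_const (by linarith)).comp (by fun_prop)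

lemma betaWeight_nonneg (α : ℝ) {u : ℝ} (h₀ : 0 ≤ u) (h₁ : u ≤ 1) : 0 ≤ betaWeight α u :=
  rpow_nonneg (mul_nonneg h₀ (by linarith)) _

lemma integral_betaWeight_mono {α : ℝ} (hα : 1/2 ≤ α) {a b : ℝ} (ha : 0 ≤ a) (hab : a ≤ b)
    (hb : b ≤ 1) : ∫ u in (0:ℝ)..a, betaWeight α u ≤ ∫ u in (0:ℝ)..b, betaWeight α u := by
  refine intervalIntegral.integral_mono_interval le_rfl ha hab ?_
    ((continuous_betaWeight hα).intervalIntegrable _ _)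
  refine (ae_restrict_iff' measurableSet_Ioc).2 (Filter.Eventually.of_forall fun u hu => ?_)
  exact betaWeight_nonneg α hu.1.le (hu.2.trans hb)

lemma kingmanSubst_self_abs_sub (x y : ℝ) : kingmanSubst x y |x - y| = 0 := by
  simp [kingmanSubst]

lemma kingmanSubst_nonneg {x y r : ℝ} (hx : 0 < x) (hy : 0 < y) (hr : |x - y| ≤ r) :
    0 ≤ kingmanSubst x y r := by
  exact div_nonneg (sub_nonneg.2 (sq_le_sq.2 (hr.trans (le_abs_self r)))) (by positivity)

lemma kingmanSubst_le_one {x y r : ℝ} (hx : 0 < x) (hy : 0 < y) (hr₀ : 0 ≤ r)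
    (hr : r ≤ x + y) : kingmanSubst x y r ≤ 1 := by
  rw [kingmanSubst, div_le_one (by positivity)]
  nlinarith

lemma hasDerivAt_kingmanSubst (x y z : ℝ) :
    HasDerivAt (kingmanSubst x y) (z / (2 * x * y)) z := by
  refine (((hasDerivAt_pow 2 z).sub_const ((x - y) ^ 2)).div_const (4 * x * y)).congr_deriv ?_
  rw [show 4 * x * y = 2 * (2 * x * y) by ring, Nat.cast_ofNat, pow_one,
    mul_div_mul_left _ _ two_ne_zero]

lemma betaWeight_kingmanSubst (α : ℝ) {x y z : ℝ} (hx : 0 < x) (hy : 0 < y)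
    (h₁ : |x - y| ≤ z) (h₂ : z ≤ x + y) :
    betaWeight α (kingmanSubst x y z) =
      ((z^2 - (x-y)^2) * ((x+y)^2 - z^2)) ^ (α - 1/2) / (4 * x * y) ^ (2*α - 1) := by
  have hz : 0 ≤ z := (abs_nonneg _).trans h₁
  have hN : 0 ≤ (z^2 - (x-y)^2) * ((x+y)^2 - z^2) := by
    exact mul_nonneg (sub_nonneg.2 (sq_le_sq.2 (h₁.trans (le_abs_self z))))
      (sub_nonneg.2 (pow_le_pow_left₀ hz h₂ 2))
  have hw : 0 < 4 * x * y := by positivity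
  have : kingmanSubst x y z * (1 - kingmanSubst x y z) =
      (z^2 - (x-y)^2) * ((x+y)^2 - z^2) / (4 * x * y) ^ 2 := by
    unfold kingmanSubst; field_simp; ring
  rw [betaWeight, this, div_rpow hN (by positivity), ← rpow_natCast_mul hw.le]
  congr 2
  push_cast
  ring

lemma Kker_mul_rpow_eq {α x y z : ℝ} (hx : 0 < x) (hy : 0 < y) (hz : 0 < z)
    (h₁ : |x - y| ≤ z) (h₂ : z ≤ x + y) :
    Kker α x y z * z ^ (2*α+1) =
      CGamma α * 2 ^ (4*α-1) * (betaWeight α (kingmanSubst x y z) * (z / (2*x*y))) := by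
  have hw : 0 < x * y := by positivity
  have h4 : (4 * x * y) ^ (2*α - 1) = 4 ^ (2*α) * (x * y) ^ (2*α) / (4 * x * y) := by
    rw [rpow_sub_one (by positivity), mul_assoc, mul_rpow (by norm_num) hw.le]
  have h2 : (2:ℝ) ^ (4*α - 1) = 4 ^ (2*α) / 2 := by
    rw [rpow_sub_one two_ne_zero, show (4:ℝ) = 2 ^ (2:ℝ) by norm_num, ← rpow_mul zero_le_two]
    ring_nf
  rw [betaWeight_kingmanSubst α hx hy h₁ h₂, Kker, h4, h2, mul_rpow hw.le hz.le,
    rpow_add hz, Real.rpow_one]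
  have : 0 < (x * y) ^ (2*α) := by positivity
  have : 0 < z ^ (2*α) := by positivity
  have : (0:ℝ) < 4 ^ (2*α) := by positivity
  field_simp
  ring

lemma tau_indicator_Icc_eq {α : ℝ} (hα : 1/2 ≤ α) {x y r : ℝ} (hx : 0 < x) (hy : 0 < y)
    (hr₁ : |x - y| ≤ r) (hr₂ : r ≤ x + y) :
    tau α y ((Icc 0 r).indicator (1 : ℝ → ℝ)) x =
      CGamma α * 2 ^ (4*α-1) * ∫ u in (0:ℝ)..kingmanSubst x y r, betaWeight α u := by
  set F : ℝ → ℝ := fun z =>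
    CGamma α * 2 ^ (4*α-1) * (betaWeight α (kingmanSubst x y z) * (z / (2*x*y)))
  have hIoc : ∀ z ∈ Ioc |x - y| (x + y),
      (Kker α x y z * z ^ (2*α+1)) • (Icc 0 r).indicator (1 : ℝ → ℝ) z = (Iic r).indicator F z := by
    intro z ⟨hz₁, hz₂⟩
    have hz : 0 < z := (abs_nonneg _).trans_lt hz₁
    by_cases hzr : z ≤ r
    · rw [indicator_of_mem (show z ∈ Icc 0 r from ⟨hz.le, hzr⟩), indicator_of_mem (mem_Iic.2 hzr),
        Pi.one_apply, smul_eq_mul, mul_one, Kker_mul_rpow_eq hx hy hz hz₁.le hz₂]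
    · rw [indicator_of_notMem (fun h : z ∈ Icc 0 r => hzr h.2),
        indicator_of_notMem (show z ∉ Iic r from hzr), smul_zero]
  have hsubst : ∫ z in |x - y|..r, F z =
      CGamma α * 2 ^ (4*α-1) * ∫ u in (0:ℝ)..kingmanSubst x y r, betaWeight α u := by
    rw [intervalIntegral.integral_const_mul, ← kingmanSubst_self_abs_sub x y,
      ← intervalIntegral.integral_comp_mul_deriv (fun z _ => hasDerivAt_kingmanSubst x y z)
        (by fun_prop) (continuous_betaWeight hα)]
    rfl
  rw [tau, if_neg hy.ne', if_neg hx.ne', intervalIntegral.integral_of_le (hr₁.trans hr₂),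
    setIntegral_congr_fun measurableSet_Ioc hIoc, setIntegral_indicator measurableSet_Iic,
    Ioc_inter_Iic, inf_eq_right.2 hr₂, ← intervalIntegral.integral_of_le hr₁, hsubst]

/-- Writing `x = n + t`, this reads `(3/4)(n+t) ≤ (3/4 + t(1-t))(n+1)`. -/
lemma kingmanSubst_succ_le {n x : ℝ} (hn : 0 < n) (hx₁ : n ≤ x) (hx₂ : x ≤ n + 1) :
    kingmanSubst (n + 1) (n + 1/2) 1 ≤ kingmanSubst x (n + 1/2) 1 := by
  have hx₀ : 0 < x := hn.trans_le hx₁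
  rw [kingmanSubst, kingmanSubst, div_le_div_iff₀ (by positivity) (by positivity)]
  nlinarith [mul_nonneg (mul_nonneg (sub_nonneg.2 hx₁) (sub_nonneg.2 hx₂)) (by linarith : 0 ≤ n + 1)]

/-- On `[n, n+1)` the translated indicator `τ_{n+1/2} 1_{[0,1]}` is bounded below by
its value at the right endpoint `n+1`. -/
theorem translated_indicator_monotone (α : ℝ) (hα : 1/2 ≤ α) (n : ℕ) (hn : 1 ≤ n)
    (x : ℝ) (hx : x ∈ Set.Ico ((n:ℝ)) ((n:ℝ) + 1)) :
    tau α ((n:ℝ) + 1/2) ((Set.Icc (0:ℝ) 1).indicator (1 : ℝ → ℝ)) ((n:ℝ) + 1) ≤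
      tau α ((n:ℝ) + 1/2) ((Set.Icc (0:ℝ) 1).indicator (1 : ℝ → ℝ)) x := by
  have hn₁ : (1:ℝ) ≤ n := by exact_mod_cast hn
  obtain ⟨hx₁, hx₂⟩ := hx
  have hx₀ : 0 < x := by linarith
  have hy : (0:ℝ) < n + 1/2 := by linarith
  have near : ∀ t : ℝ, n ≤ t → t ≤ n + 1 → |t - (n + 1/2)| ≤ 1 := fun t h₁ h₂ =>
    abs_le.2 ⟨by linarith, by linarith⟩
  rw [tau_indicator_Icc_eq hα (by linarith) hy (near _ (by linarith) le_rfl) (by linarith),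
    tau_indicator_Icc_eq hα hx₀ hy (near _ hx₁ hx₂.le) (by linarith)]
  refine mul_le_mul_of_nonneg_left (integral_betaWeight_mono hα ?_
    (kingmanSubst_succ_le (by linarith) hx₁ hx₂.le)
    (kingmanSubst_le_one hx₀ hy zero_le_one (by linarith))) ?_
  · exact kingmanSubst_nonneg (by linarith) hy (near _ (by linarith) le_rfl)
  · exact mul_nonneg (CGamma_pos (by linarith)).le (rpow_nonneg zero_le_two _)
end
end

section
/- Pointwise upper bound for the translated unit indicator: for all x, y > 0 with |x − y| ≤ 1, one has τ_y 1_{[0,1]}(x) ≤ C_Γ·4^{α−1/2}·(xy)^{−(α+1/2)}. -/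
open MeasureTheory Real Set ENNReal ComplexOrder

noncomputable section

set_option maxHeartbeats 800000

/-- Pointwise upper bound for the translated unit indicator:
`τ_y 1_{[0,1]}(x) ≤ C_Γ·4^{α-1/2}·(xy)^{-(α+1/2)}` whenever `|x - y| ≤ 1`. -/
theorem translated_indicator_upper_bound (α : ℝ) (hα : 1/2 ≤ α)
    (x y : ℝ) (hx : 0 < x) (hy : 0 < y) (h : |x - y| ≤ 1) :
    tau α y ((Set.Icc (0:ℝ) 1).indicator (1 : ℝ → ℝ)) x ≤
      CGamma α * (4:ℝ) ^ (α - 1/2) * (x*y) ^ (-(α + 1/2)) := by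
  have hC : 0 ≤ CGamma α := by
    have h1 : 0 < Real.Gamma (α+1) := Real.Gamma_pos_of_pos (by linarith)
    have h2 : 0 < Real.Gamma (1/2) := Real.Gamma_pos_of_pos (by norm_num)
    have h3 : 0 < Real.Gamma (α+1/2) := Real.Gamma_pos_of_pos (by linarith)
    unfold CGamma
    positivity
  set a := |x - y| with ha
  set b := x + y with hb
  have ha0 : 0 ≤ a := abs_nonneg _
  have hab : a ≤ b := by
    rw [ha, hb, abs_sub_le_iff]; constructor <;> linarith
  set c := min b 1 with hc
  have hac : a ≤ c := le_min hab h
  have hc1 : c ≤ 1 := min_le_right _ _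
  have hc0 : 0 ≤ c := le_trans ha0 hac
  have hxy : 0 < x * y := mul_pos hx hy
  set M := CGamma α * (4:ℝ) ^ (α - 1/2) * (x*y) ^ (-(α + 1/2)) with hM
  have hM0 : 0 ≤ M := by positivity
  rw [tau, if_neg hy.ne', if_neg hx.ne']
  rw [intervalIntegral.integral_of_le hab]
  have hrw : ∀ z : ℝ, (Kker α x y z * z ^ (2*α+1)) • ((Set.Icc (0:ℝ) 1).indicator (1:ℝ→ℝ)) z
      = (Set.Icc (0:ℝ) 1).indicator (fun z => Kker α x y z * z ^ (2*α+1)) z := by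
    intro z
    by_cases hz : z ∈ Set.Icc (0:ℝ) 1 <;>
      simp [Set.indicator_of_mem, Set.indicator_of_notMem, hz]
  simp only [hrw]
  rw [MeasureTheory.setIntegral_indicator measurableSet_Icc]
  have hset : Set.Ioc a b ∩ Set.Icc 0 1 = Set.Ioc a c := by
    ext z
    simp only [Set.mem_inter_iff, Set.mem_Ioc, Set.mem_Icc, hc, le_min_iff, min_def]
    constructor
    · rintro ⟨⟨h1, h2⟩, h3, h4⟩
      refine ⟨h1, ?_⟩
      split <;> [exact h2; exact h4]
    · rintro ⟨h1, h2⟩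
      have hz0 : (0:ℝ) < z := lt_of_le_of_lt ha0 h1
      split at h2
      · exact ⟨⟨h1, h2⟩, hz0.le, le_trans h2 (by linarith [min_le_right b (1:ℝ)])⟩
      · exact ⟨⟨h1, by linarith⟩, hz0.le, h2⟩
  rw [hset]
  have hbound : ∀ z ∈ Set.Ioc a c, Kker α x y z * z ^ (2*α+1) ≤ M * (2*α+1) * z ^ (2*α) := by
    intro z hz
    have hz0 : 0 < z := lt_of_le_of_lt ha0 hz.1
    have hza : a < z := hz.1
    have hzb : z ≤ b := le_trans hz.2 (min_le_left _ _)
    have he : (0:ℝ) ≤ α - 1/2 := by linarith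
    have hd2 : (x-y)^2 ≤ z^2 := by
      nlinarith [sq_abs (x-y), ha, hza.le, ha0]
    have hzb2 : z^2 ≤ (x+y)^2 := by nlinarith
    have hP0 : 0 ≤ (z^2 - (x-y)^2) * ((x+y)^2 - z^2) := by nlinarith
    have hP : (z^2 - (x-y)^2) * ((x+y)^2 - z^2) ≤ 4*(x*y)*(z*z) := by nlinarith
    have h1 : ((z^2 - (x-y)^2) * ((x+y)^2 - z^2)) ^ (α - 1/2)
        ≤ (4*(x*y)*(z*z)) ^ (α - 1/2) := Real.rpow_le_rpow hP0 hP he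
    have hden : (0:ℝ) < (x*y*z) ^ (2*α) := Real.rpow_pos_of_pos (by positivity) _
    rw [Kker, div_mul_eq_mul_div, div_le_iff₀ hden]
    have e1 : (x*y) ^ (α - 1/2) = (x*y) ^ (-(α + 1/2)) * (x*y) ^ (2*α) := by
      rw [← Real.rpow_add hxy]; congr 1; ring
    have e2 : z ^ (α - 1/2) * z ^ (α - 1/2) * z ^ (2*α+1) = z ^ (2*α) * z ^ (2*α) := by
      rw [← Real.rpow_add hz0, ← Real.rpow_add hz0, ← Real.rpow_add hz0]; congr 1; ring
    have key : CGamma α * (4*(x*y)*(z*z)) ^ (α - 1/2) * z ^ (2*α+1)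
        = M * z ^ (2*α) * (x*y*z) ^ (2*α) := by
      rw [hM, Real.mul_rpow (by positivity : (0:ℝ) ≤ 4*(x*y)) (by positivity : (0:ℝ) ≤ z*z),
        Real.mul_rpow (by norm_num : (0:ℝ) ≤ (4:ℝ)) hxy.le,
        Real.mul_rpow hz0.le hz0.le,
        Real.mul_rpow hxy.le hz0.le, e1]
      linear_combination (CGamma α * (4:ℝ) ^ (α - 1/2) * ((x*y) ^ (-(α + 1/2)) * (x*y) ^ (2*α))) * e2
    calc CGamma α * ((z^2 - (x-y)^2) * ((x+y)^2 - z^2)) ^ (α - 1/2) * z ^ (2*α+1)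
        ≤ CGamma α * (4*(x*y)*(z*z)) ^ (α - 1/2) * z ^ (2*α+1) := by
          gcongr
      _ = M * z ^ (2*α) * (x*y*z) ^ (2*α) := key
      _ ≤ M * (2*α+1) * z ^ (2*α) * (x*y*z) ^ (2*α) := by
          have hz2 : 0 ≤ z ^ (2*α) := Real.rpow_nonneg hz0.le _
          nlinarith [mul_nonneg (mul_nonneg hM0 hz2) hden.le]
  have hint : IntegrableOn (fun z : ℝ => M * (2*α+1) * z ^ (2*α)) (Set.Ioc a c) volume := by
    rw [← intervalIntegrable_iff_integrableOn_Ioc_of_le hac]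
    exact (intervalIntegral.intervalIntegrable_rpow (by left; linarith)).const_mul _
  have key2 : ∫ z in Set.Ioc a c, Kker α x y z * z ^ (2*α+1)
      ≤ ∫ z in Set.Ioc a c, M * (2*α+1) * z ^ (2*α) := by
    apply MeasureTheory.integral_mono_of_nonneg
    · filter_upwards [MeasureTheory.ae_restrict_mem measurableSet_Ioc] with z hz
      have hz0 : 0 < z := lt_of_le_of_lt ha0 hz.1
      have hzb : z ≤ b := le_trans hz.2 (min_le_left _ _)
      have hd2 : (x-y)^2 ≤ z^2 := by nlinarith [sq_abs (x-y), ha, hz.1, ha0]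
      have hzb2 : z^2 ≤ (x+y)^2 := by nlinarith
      have hP0 : 0 ≤ (z^2 - (x-y)^2) * ((x+y)^2 - z^2) := by nlinarith
      have : 0 ≤ Kker α x y z := by
        rw [Kker]
        positivity
      positivity
    · exact hint
    · filter_upwards [MeasureTheory.ae_restrict_mem measurableSet_Ioc] with z hz
      exact hbound z hz
  calc ∫ z in Set.Ioc a c, Kker α x y z * z ^ (2*α+1)
      ≤ ∫ z in Set.Ioc a c, M * (2*α+1) * z ^ (2*α) := key2
    _ = M * (2*α+1) * ∫ z in a..c, z ^ (2*α) := by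
        rw [intervalIntegral.integral_of_le hac, MeasureTheory.integral_const_mul]
    _ = M * (2*α+1) * ((c ^ (2*α+1) - a ^ (2*α+1)) / (2*α+1)) := by
        rw [integral_rpow (Or.inl (by linarith))]
    _ ≤ M := by
        have h2a : (0:ℝ) < 2*α+1 := by linarith
        have hcle : c ^ (2*α+1) ≤ 1 := Real.rpow_le_one hc0 hc1 h2a.le
        have hage : 0 ≤ a ^ (2*α+1) := Real.rpow_nonneg ha0 _
        have heq : M * (2*α+1) * ((c ^ (2*α+1) - a ^ (2*α+1)) / (2*α+1))
            = M * (c ^ (2*α+1) - a ^ (2*α+1)) := by field_simp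
        rw [heq]
        nlinarith
end
end

section
/- Decay of the Fourier transform of the unit interval indicator: there exist constants C > 0 and N > 0 (depending only on α) such that for all λ ≥ N, |∫_0^1 j_α(λx)·x^{2α+1} dx| ≤ C·λ^{−α−3/2}. -/
/-!
The series `jBessel` converges absolutely (its coefficients are at most `1 / (4 ^ k k!)`), so it
may be differentiated termwise; comparing coefficients gives the Bessel equation
`x j'' + (2β + 1) j' + x j = 0` and the recurrence
`(x ^ (2α + 2) j_{α+1}(λx))' = (2α + 2) x ^ (2α + 1) j_α(λx)`, which evaluates the integral as
`j_{α+1}(λ) / (2α + 2)`.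

For the decay, `u = x ^ (β + 1/2) j_β` solves `u'' = ((β ^ 2 - 1/4) / x ^ 2 - 1) u`, and
`(u' ^ 2 + u ^ 2) exp ((β ^ 2 - 1/4) / x)` has derivative
`-exp ((β ^ 2 - 1/4) / x) (β ^ 2 - 1/4) / x ^ 2 (u' - u) ^ 2 ≤ 0` when `β ≥ 1/2`. So `u` is bounded
on `[1, ∞)`, i.e. `j_β(x) = O(x ^ (-β - 1/2))`; with `β = α + 1` this is the claimed rate.
-/

open MeasureTheory Real Set ENNReal ComplexOrder

noncomputable section

def besselCoeff (β : ℝ) (k : ℕ) : ℝ :=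
  (-1) ^ k * Real.Gamma (β + 1) / (2 ^ (2 * k) * (k.factorial : ℝ) * Real.Gamma (β + k + 1))

lemma jBessel_eq_tsum (β x : ℝ) : jBessel β x = ∑' k, besselCoeff β k * x ^ (2 * k) := rfl

lemma Gamma_add_one_le_Gamma_add_nat_add_one {β : ℝ} (hβ : 0 ≤ β) (k : ℕ) :
    Real.Gamma (β + 1) ≤ Real.Gamma (β + k + 1) := by
  induction k with
  | zero => simp
  | succ n ih =>
    have hpos : 0 < Real.Gamma (β + n + 1) := Real.Gamma_pos_of_pos (by positivity)
    rw [show β + (n + 1 : ℕ) + 1 = (β + n + 1) + 1 by push_cast; ring,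
      Real.Gamma_add_one (s := β + n + 1) (by positivity)]
    nlinarith [(Nat.cast_nonneg n : (0:ℝ) ≤ n)]

lemma abs_besselCoeff_le {β : ℝ} (hβ : 0 ≤ β) (k : ℕ) :
    |besselCoeff β k| ≤ ((4 : ℝ) ^ k * k.factorial)⁻¹ := by
  have hΓ : 0 < Real.Gamma (β + 1) := Real.Gamma_pos_of_pos (by positivity)
  rw [besselCoeff, pow_mul, abs_div, abs_mul, abs_pow, abs_neg, abs_one, one_pow, one_mul,
    abs_of_pos hΓ, abs_of_pos (by positivity), div_le_iff₀ (by positivity)]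
  calc Real.Gamma (β + 1) ≤ Real.Gamma (β + k + 1) :=
        Gamma_add_one_le_Gamma_add_nat_add_one hβ k
    _ = _ := by field_simp; norm_num

lemma besselCoeff_zero {β : ℝ} (hβ : -1 < β) : besselCoeff β 0 = 1 := by
  have : Real.Gamma (β + 1) ≠ 0 := (Real.Gamma_pos_of_pos (by linarith)).ne'
  simp [besselCoeff, this]

lemma besselCoeff_succ {β : ℝ} (hβ : -1 < β) (k : ℕ) :
    4 * (k + 1) * (β + k + 1) * besselCoeff β (k + 1) = -besselCoeff β k := by
  have h0 : 0 < β + k + 1 := by have : (0:ℝ) ≤ k := k.cast_nonneg; linarith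
  rw [besselCoeff, besselCoeff, Nat.cast_succ, ← add_assoc, Real.Gamma_add_one h0.ne',
    Nat.factorial_succ, Nat.mul_succ, pow_add, pow_succ]
  push_cast
  field_simp
  ring

lemma add_nat_mul_besselCoeff_add_one {α : ℝ} (hα : -1 < α) (k : ℕ) :
    (α + 1 + k) * besselCoeff (α + 1) k = (α + 1) * besselCoeff α k := by
  have h0 : 0 < α + k + 1 := by have : (0:ℝ) ≤ k := k.cast_nonneg; linarith
  rw [besselCoeff, besselCoeff, Real.Gamma_add_one (by linarith),
    show α + 1 + k + 1 = (α + k + 1) + 1 by ring, Real.Gamma_add_one h0.ne']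
  field_simp
  ring

-- `m` stands for the factor `2k` or `2k (2k - 1)` produced by differentiating `x ^ (2k)`.
lemma abs_besselCoeff_mul_mul_pow_le {β c m R x : ℝ} (hβ : 0 ≤ β) {k e : ℕ}
    (hm : |m| ≤ c * 4 ^ k) (he : e ≤ 2 * k) (hR : 1 ≤ R) (hx : |x| ≤ R) :
    |besselCoeff β k * m * x ^ e| ≤ c * ((R ^ 2) ^ k / k.factorial) := by
  have hc : 0 ≤ c * 4 ^ k := (abs_nonneg m).trans hm
  have hxe : |x| ^ e ≤ (R ^ 2) ^ k :=
    (pow_le_pow_left₀ (abs_nonneg x) hx e).trans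
      ((pow_le_pow_right₀ hR he).trans_eq (pow_mul R 2 k))
  calc |besselCoeff β k * m * x ^ e| = |besselCoeff β k| * |m| * |x| ^ e := by
        rw [abs_mul, abs_mul, abs_pow]
    _ ≤ ((4 : ℝ) ^ k * k.factorial)⁻¹ * (c * 4 ^ k) * (R ^ 2) ^ k := by
        gcongr
        exact abs_besselCoeff_le hβ k
    _ = c * ((R ^ 2) ^ k / k.factorial) := by field_simp

lemma summable_besselCoeff_mul_mul_pow {β c : ℝ} (hβ : 0 ≤ β) {m : ℕ → ℝ}
    {e : ℕ → ℕ}    (hm : ∀ k, |m k| ≤ c * 4 ^ k) (he : ∀ k, e k ≤ 2 * k) (x : ℝ) :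
    Summable fun k => besselCoeff β k * m k * x ^ e k :=
  .of_norm_bounded ((Real.summable_pow_div_factorial _).mul_left c) fun k =>
    abs_besselCoeff_mul_mul_pow_le hβ (hm k) (he k) (le_max_left 1 |x|) (le_max_right 1 |x|)

lemma hasDerivAt_tsum_of_summable_bound_on_balls {f f' : ℕ → ℝ → ℝ}
    (hf : ∀ k y, HasDerivAt (f k) (f' k y) y)
    (hf' : ∀ R, ∃ u : ℕ → ℝ, Summable u ∧ ∀ k y, |y| < R → |f' k y| ≤ u k)
    (h0 : Summable fun k => f k 0) (x : ℝ) :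
    HasDerivAt (fun y => ∑' k, f k y) (∑' k, f' k x) x := by
  obtain ⟨u, hu, hbound⟩ := hf' (|x| + 1)
  have mem : ∀ {y : ℝ}, |y| < |x| + 1 → y ∈ Metric.ball 0 (|x| + 1) := by
    intro y hy; simpa [Metric.mem_ball, Real.dist_eq] using hy
  exact hasDerivAt_tsum_of_isPreconnected hu Metric.isOpen_ball
    (convex_ball 0 _).isPreconnected (fun k y _ => hf k y)
    (fun k y hy => hbound k y (by simpa [Metric.mem_ball, Real.dist_eq] using hy))
    (mem (by rw [abs_zero]; positivity)) h0 (mem (by linarith))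

lemma exists_summable_bound_besselCoeff_mul_mul_pow {β c : ℝ} (hβ : 0 ≤ β) {m : ℕ → ℝ}
    {e : ℕ → ℕ} (hm : ∀ k, |m k| ≤ c * 4 ^ k) (he : ∀ k, e k ≤ 2 * k) (R : ℝ) :
    ∃ u : ℕ → ℝ, Summable u ∧
      ∀ k y, |y| < R → |besselCoeff β k * m k * y ^ e k| ≤ u k :=
  ⟨_, (Real.summable_pow_div_factorial (max 1 R ^ 2)).mul_left c, fun k _ hy =>
    abs_besselCoeff_mul_mul_pow_le hβ (hm k) (he k) (le_max_left 1 R)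
      (hy.le.trans (le_max_right 1 R))⟩

lemma abs_natCast_two_mul_le (k : ℕ) : |((2 * k : ℕ) : ℝ)| ≤ 2 * 4 ^ k := by
  have : k < 4 ^ k := k.lt_pow_self (by norm_num)
  rw [Nat.abs_cast]; exact_mod_cast (by omega : 2 * k ≤ 2 * 4 ^ k)

lemma abs_natCast_two_mul_mul_le (k : ℕ) :
    |((2 * k : ℕ) : ℝ) * ((2 * k - 1 : ℕ) : ℝ)| ≤ 4 * 4 ^ k := by
  have hk : k * k ≤ 4 ^ k := by
    have : k < 2 ^ k := k.lt_two_pow_self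
    calc k * k ≤ 2 ^ k * 2 ^ k := Nat.mul_le_mul this.le this.le
      _ = 4 ^ k := by rw [← mul_pow]; norm_num
  rw [← Nat.cast_mul, Nat.abs_cast]
  exact_mod_cast (Nat.mul_le_mul_left _ (Nat.sub_le _ _)).trans
    (by nlinarith : 2 * k * (2 * k) ≤ 4 * 4 ^ k)

-- At `k = 0` the truncated exponent `2 * k - 1 = 0` is harmless: the factor `2 * k` vanishes.
def jBesselDeriv (β x : ℝ) : ℝ :=
  ∑' k : ℕ, besselCoeff β k * ((2 * k : ℕ) : ℝ) * x ^ (2 * k - 1)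

def jBesselDeriv2 (β x : ℝ) : ℝ :=
  ∑' k : ℕ,
    besselCoeff β k * (((2 * k : ℕ) : ℝ) * ((2 * k - 1 : ℕ) : ℝ)) * x ^ (2 * k - 1 - 1)

lemma summable_jBessel {β : ℝ} (hβ : 0 ≤ β) (x : ℝ) :
    Summable fun k => besselCoeff β k * x ^ (2 * k) := by
  simpa using summable_besselCoeff_mul_mul_pow hβ (m := 1) (c := 1)
    (fun _ => by simpa using one_le_pow₀ (by norm_num : (1:ℝ) ≤ 4)) (fun _ => le_rfl) x

lemma summable_jBesselDeriv {β : ℝ} (hβ : 0 ≤ β) (x : ℝ) :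
    Summable fun k : ℕ => besselCoeff β k * ((2 * k : ℕ) : ℝ) * x ^ (2 * k - 1) :=
  summable_besselCoeff_mul_mul_pow hβ abs_natCast_two_mul_le (fun _ => Nat.sub_le _ _) x

lemma summable_jBesselDeriv2 {β : ℝ} (hβ : 0 ≤ β) (x : ℝ) : Summable fun k : ℕ =>
    besselCoeff β k * (((2 * k : ℕ) : ℝ) * ((2 * k - 1 : ℕ) : ℝ)) * x ^ (2 * k - 1 - 1) :=
  summable_besselCoeff_mul_mul_pow hβ abs_natCast_two_mul_mul_le (fun k => by omega) x

lemma hasDerivAt_jBessel {β : ℝ} (hβ : 0 ≤ β) (x : ℝ) :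
    HasDerivAt (jBessel β) (jBesselDeriv β x) x := by
  rw [show jBessel β = fun y => ∑' k, besselCoeff β k * y ^ (2 * k) from
    funext (jBessel_eq_tsum β)]
  refine hasDerivAt_tsum_of_summable_bound_on_balls (fun k y => ?_)
    (exists_summable_bound_besselCoeff_mul_mul_pow hβ abs_natCast_two_mul_le
      (fun _ => Nat.sub_le _ _))
    (summable_jBessel hβ 0) x
  exact ((hasDerivAt_pow (2 * k) y).const_mul (besselCoeff β k)).congr_deriv (by ring)

lemma hasDerivAt_jBesselDeriv {β : ℝ} (hβ : 0 ≤ β) (x : ℝ) :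
    HasDerivAt (jBesselDeriv β) (jBesselDeriv2 β x) x := by
  refine hasDerivAt_tsum_of_summable_bound_on_balls
    (f := fun k y => besselCoeff β k * ((2 * k : ℕ) : ℝ) * y ^ (2 * k - 1)) (fun k y => ?_)
    (exists_summable_bound_besselCoeff_mul_mul_pow hβ abs_natCast_two_mul_mul_le
      (fun k => by omega))
    (summable_jBesselDeriv hβ 0) x
  exact ((hasDerivAt_pow (2 * k - 1) y).const_mul
    (besselCoeff β k * ((2 * k : ℕ) : ℝ))).congr_deriv (by ring)

lemma jBessel_ode {β : ℝ} (hβ : 0 ≤ β) (x : ℝ) :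
    x * jBesselDeriv2 β x + (2 * β + 1) * jBesselDeriv β x + x * jBessel β x = 0 := by
  have s1 := summable_jBesselDeriv hβ x
  have s2 := summable_jBesselDeriv2 hβ x
  have lhs : x * jBesselDeriv2 β x + (2 * β + 1) * jBesselDeriv β x
      = ∑' k : ℕ, (x * (besselCoeff β k * (((2 * k : ℕ) : ℝ) * ((2 * k - 1 : ℕ) : ℝ)) *
          x ^ (2 * k - 1 - 1)) + (2 * β + 1) * (besselCoeff β k * ((2 * k : ℕ) : ℝ) *
          x ^ (2 * k - 1))) := by
    rw [jBesselDeriv2, jBesselDeriv, ← tsum_mul_left, ← tsum_mul_left,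
      ← (s2.mul_left x).tsum_add (s1.mul_left (2 * β + 1))]
  have shift : ∀ k : ℕ,
      x * (besselCoeff β (k + 1) *
          (((2 * (k + 1) : ℕ) : ℝ) * ((2 * (k + 1) - 1 : ℕ) : ℝ)) * x ^ (2 * (k + 1) - 1 - 1)) +
        (2 * β + 1) *
          (besselCoeff β (k + 1) * ((2 * (k + 1) : ℕ) : ℝ) * x ^ (2 * (k + 1) - 1))
      = -(x * (besselCoeff β k * x ^ (2 * k))) := by
    intro k
    rw [show 2 * (k + 1) - 1 - 1 = 2 * k by omega, show 2 * (k + 1) - 1 = 2 * k + 1 by omega]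
    push_cast
    linear_combination x * x ^ (2 * k) * besselCoeff_succ (β := β) (by linarith) k
  rw [lhs, ((s2.mul_left x).add (s1.mul_left _)).tsum_eq_zero_add, tsum_congr shift, tsum_neg,
    tsum_mul_left, ← jBessel_eq_tsum]
  simp

lemma jBessel_add_one_recurrence {α : ℝ} (hα : 0 ≤ α) (y : ℝ) :
    y * jBesselDeriv (α + 1) y + (2 * α + 2) * jBessel (α + 1) y =
      (2 * α + 2) * jBessel α y := by
  have hα1 : 0 ≤ α + 1 := by linarith
  rw [jBesselDeriv, jBessel_eq_tsum, jBessel_eq_tsum, ← tsum_mul_left, ← tsum_mul_left,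
    ← tsum_mul_left, ← ((summable_jBesselDeriv hα1 y).mul_left y).tsum_add
      ((summable_jBessel hα1 y).mul_left _)]
  congr 1 with k
  have hstep := add_nat_mul_besselCoeff_add_one (by linarith : -1 < α) k
  rcases k with _ | n
  · simp [besselCoeff_zero (by linarith : -1 < α), besselCoeff_zero (by linarith : -1 < α + 1)]
  · rw [show 2 * (n + 1) - 1 = 2 * n + 1 by omega]
    push_cast at hstep ⊢
    linear_combination (2 * y ^ (2 * n + 1) * y) * hstep

lemma continuous_jBessel {β : ℝ} (hβ : 0 ≤ β) : Continuous (jBessel β) :=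
  continuous_iff_continuousAt.2 fun x => (hasDerivAt_jBessel hβ x).continuousAt

lemma hasDerivAt_rpow_mul_jBessel_add_one {α : ℝ} (hα : 0 ≤ α) (lam : ℝ) {x : ℝ}
    (hx : 0 < x) :
    HasDerivAt (fun y => y ^ (2 * α + 2) * jBessel (α + 1) (lam * y))
      ((2 * α + 2) * (jBessel α (lam * x) * x ^ (2 * α + 1))) x := by
  have hpow : HasDerivAt (fun y : ℝ => y ^ (2 * α + 2)) ((2 * α + 2) * x ^ (2 * α + 1)) x := by
    simpa [show 2 * α + 2 - 1 = 2 * α + 1 by ring] using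
      Real.hasDerivAt_rpow_const (p := 2 * α + 2) (Or.inl hx.ne')
  have hj : HasDerivAt (fun y => jBessel (α + 1) (lam * y))
      (jBesselDeriv (α + 1) (lam * x) * lam) x := by
    have := (hasDerivAt_jBessel (β := α + 1) (by linarith) (lam * x)).comp x
      ((hasDerivAt_id x).const_mul lam)
    rwa [mul_one] at this
  have hx2 : x ^ (2 * α + 2) = x ^ (2 * α + 1) * x := by
    rw [← Real.rpow_add_one hx.ne']; ring_nf
  refine (hpow.mul hj).congr_deriv ?_
  rw [hx2]
  linear_combination x ^ (2 * α + 1) * jBessel_add_one_recurrence hα (lam * x)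

lemma integral_jBessel_mul_rpow {α : ℝ} (hα : 0 ≤ α) (lam : ℝ) :
    ∫ x in (0:ℝ)..1, jBessel α (lam * x) * x ^ (2 * α + 1) =
      jBessel (α + 1) lam / (2 * α + 2) := by
  have hcont : ContinuousOn (fun y => y ^ (2 * α + 2) * jBessel (α + 1) (lam * y)) (Icc 0 1) :=
    ((Real.continuous_rpow_const (by linarith)).mul
      ((continuous_jBessel (by linarith)).comp (continuous_const_mul lam))).continuousOn
  have hint : IntervalIntegrable (fun x => jBessel α (lam * x) * x ^ (2 * α + 1)) volume 0 1 :=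
    (((continuous_jBessel hα).comp (continuous_const_mul lam)).mul
      (Real.continuous_rpow_const (by linarith))).intervalIntegrable 0 1
  have hftc := intervalIntegral.integral_eq_sub_of_hasDerivAt_of_le zero_le_one hcont
    (fun x hx => hasDerivAt_rpow_mul_jBessel_add_one hα lam hx.1) (hint.const_mul (2 * α + 2))
  rw [intervalIntegral.integral_const_mul, Real.one_rpow, Real.zero_rpow (by linarith)] at hftc
  rw [_root_.eq_div_iff (by linarith), mul_comm, hftc]
  simp

def besselNormal (β x : ℝ) : ℝ := x ^ (β + 1/2) * jBessel β x

def besselNormalDeriv (β x : ℝ) : ℝ :=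
  (β + 1/2) * x ^ (β - 1/2) * jBessel β x + x ^ (β + 1/2) * jBesselDeriv β x

lemma hasDerivAt_besselNormal {β x : ℝ} (hβ : 0 ≤ β) (hx : 0 < x) :
    HasDerivAt (besselNormal β) (besselNormalDeriv β x) x := by
  have hpow := Real.hasDerivAt_rpow_const (p := β + 1/2) (Or.inl hx.ne')
  rw [show β + 1/2 - 1 = β - 1/2 by ring] at hpow
  exact hpow.mul (hasDerivAt_jBessel hβ x)

lemma hasDerivAt_besselNormalDeriv {β x : ℝ} (hβ : 0 ≤ β) (hx : 0 < x) :
    HasDerivAt (besselNormalDeriv β) (((β ^ 2 - 1/4) / x ^ 2 - 1) * besselNormal β x) x := by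
  have hpow₁ := Real.hasDerivAt_rpow_const (p := β - 1/2) (Or.inl hx.ne')
  have hpow₂ := Real.hasDerivAt_rpow_const (p := β + 1/2) (Or.inl hx.ne')
  refine (((hpow₁.const_mul (β + 1/2)).mul (hasDerivAt_jBessel hβ x)).add
    (hpow₂.mul (hasDerivAt_jBesselDeriv hβ x))).congr_deriv ?_
  have e₁ : x ^ (β - 1/2) = x ^ (β - 1/2 - 1) * x := by
    rw [← Real.rpow_add_one hx.ne']; ring_nf
  have e₂ : x ^ (β + 1/2) = x ^ (β - 1/2 - 1) * x * x := by
    rw [← Real.rpow_add_one hx.ne', ← Real.rpow_add_one hx.ne']; ring_nf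
  have hx2 : (β ^ 2 - 1/4) / x ^ 2 * x ^ 2 = β ^ 2 - 1/4 := div_mul_cancel₀ _ (by positivity)
  rw [besselNormal, show β + 1/2 - 1 = β - 1/2 by ring, e₁, e₂]
  linear_combination x ^ (β - 1/2 - 1) * x * jBessel_ode hβ x -
    x ^ (β - 1/2 - 1) * jBessel β x * hx2

lemma antitoneOn_besselNormal_energy {β : ℝ} (hβ : 1/2 ≤ β) :
    AntitoneOn (fun x => (besselNormalDeriv β x ^ 2 + besselNormal β x ^ 2) *
      Real.exp ((β ^ 2 - 1/4) / x)) (Ioi 0) := by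
  have hβ₀ : 0 ≤ β := by linarith
  have hc : 0 ≤ β ^ 2 - 1/4 := by nlinarith
  have hderiv : ∀ x ∈ Ioi (0:ℝ), HasDerivAt
      (fun x => (besselNormalDeriv β x ^ 2 + besselNormal β x ^ 2) *
        Real.exp ((β ^ 2 - 1/4) / x))
      (-(Real.exp ((β ^ 2 - 1/4) / x) * ((β ^ 2 - 1/4) / x ^ 2) *
        (besselNormalDeriv β x - besselNormal β x) ^ 2)) x := by
    intro x hx
    have hx : 0 < x := hx
    have hu := hasDerivAt_besselNormal hβ₀ hx
    have hu' := hasDerivAt_besselNormalDeriv hβ₀ hx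
    have hexp := ((hasDerivAt_inv hx.ne').const_mul (β ^ 2 - 1/4)).exp
    refine (((hu'.pow 2).add (hu.pow 2)).mul hexp).congr_deriv ?_
    simp only [Pi.add_apply, Pi.pow_apply, div_eq_mul_inv]
    field_simp
    ring
  refine antitoneOn_of_hasDerivWithinAt_nonpos (convex_Ioi 0)
    (fun x hx => (hderiv x hx).continuousAt.continuousWithinAt)
    (fun x hx => (hderiv x (interior_subset hx)).hasDerivWithinAt) fun x hx => ?_
  rw [interior_Ioi] at hx
  have : 0 ≤ Real.exp ((β ^ 2 - 1/4) / x) * ((β ^ 2 - 1/4) / x ^ 2) *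
      (besselNormalDeriv β x - besselNormal β x) ^ 2 := by positivity
  linarith

lemma jBessel_isBigO_rpow {β : ℝ} (hβ : 1/2 ≤ β) :
    jBessel β =O[Filter.atTop] fun x => x ^ (-(β + 1/2)) := by
  set M := (besselNormalDeriv β 1 ^ 2 + besselNormal β 1 ^ 2) * Real.exp (β ^ 2 - 1/4)
  refine .of_bound (Real.sqrt M) ((Filter.eventually_ge_atTop 1).mono fun x hx => ?_)
  have hx₀ : 0 < x := one_pos.trans_le hx
  have hE : besselNormal β x ^ 2 ≤ M := by
    have hanti := antitoneOn_besselNormal_energy hβ (mem_Ioi.2 one_pos) (mem_Ioi.2 hx₀) hx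
    have : 1 ≤ Real.exp ((β ^ 2 - 1/4) / x) :=
      Real.one_le_exp (div_nonneg (by nlinarith) hx₀.le)
    simp only [div_one] at hanti
    nlinarith [sq_nonneg (besselNormalDeriv β x), sq_nonneg (besselNormal β x)]
  have hxp : 0 < x ^ (β + 1/2) := Real.rpow_pos_of_pos hx₀ _
  rw [Real.norm_eq_abs, Real.norm_eq_abs, abs_of_pos (Real.rpow_pos_of_pos hx₀ _),
    Real.rpow_neg hx₀.le, ← div_eq_mul_inv, le_div_iff₀ hxp, ← abs_of_pos hxp, ← abs_mul,
    mul_comm, ← besselNormal]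
  exact Real.abs_le_sqrt hE

/-- Decay of the Fourier transform of the unit-interval indicator: for large `λ`,
`|∫_0^1 j_α(λx)·x^(2α+1) dx| ≤ C·λ^{-α-3/2}`. -/
theorem fourier_unit_indicator_decay (α : ℝ) (hα : 1/2 ≤ α) :
    ∃ C : ℝ, 0 < C ∧ ∃ N : ℝ, 0 < N ∧ ∀ lam : ℝ, N ≤ lam →
      |∫ x in (0:ℝ)..1, jBessel α (lam * x) * x ^ (2*α+1)| ≤ C * lam ^ (-α - 3/2) := by
  obtain ⟨C, hC, hO⟩ := (jBessel_isBigO_rpow (β := α + 1) (by linarith)).exists_pos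
  obtain ⟨N, hN⟩ := Filter.eventually_atTop.1 hO.bound
  refine ⟨C / (2 * α + 2), by positivity, max N 1, by positivity, fun lam hlam => ?_⟩
  have hlam₀ : 0 < lam := one_pos.trans_le (le_of_max_le_right hlam)
  have hbound := hN lam (le_of_max_le_left hlam)
  rw [Real.norm_eq_abs, Real.norm_eq_abs, abs_of_pos (Real.rpow_pos_of_pos hlam₀ _),
    show -(α + 1 + 1/2) = -α - 3/2 by ring] at hbound
  rw [integral_jBessel_mul_rpow (by linarith), abs_div,
    abs_of_pos (by linarith : (0:ℝ) < 2 * α + 2), div_mul_eq_mul_div]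
  gcongr
end
end
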